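/- arXiv:2305.04363 — 8 statements merged into one kernel-verified Lean document; each statement's English description precedes it below -/
import Mathlib

section
/- Let 0 < p ≤ 1/2 and 0 < ε < 1, and suppose that the distinct sets N_1, …, N_k ⊆ X form a (p, ε)-robust sunflower with kernel K. Then for every i ∈ [k], the sets N_1, …, N_{i−1}, N_{i+1}, …, N_k form a (2p, 2ε)-robust sunflower with kernel K. -/
open Finset

/-- Probability that a `p`-biased random subset of the finite universe `X` (each element
included independently with probability `p`) equals `R`. -/
noncomputable def subsetProb {X : Type*} [Fintype X] [DecidableEq X] (p : ℝ) (R : Finset X) : ℝ :=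
  p ^ R.card * (1 - p) ^ (Finset.univ \ R).card

/-- Probability over a `p`-biased random subset `R` of `X` that some member of the family
`F` is contained in `R ∪ K`. -/
noncomputable def coverProb {X : Type*} [Fintype X] [DecidableEq X] (p : ℝ)
    (F : Finset (Finset X)) (K : Finset X) : ℝ :=
  ∑ R ∈ (Finset.univ : Finset (Finset X)).filter (fun R => ∃ S ∈ F, S ⊆ R ∪ K),
    subsetProb p R

/-- `F` is a `(p, ε)`-robust sunflower with kernel `K`: `K ∉ F` and a `p`-biased random
set `R` satisfies `∃ S ∈ F, S ⊆ R ∪ K` with probability at least `1 - ε`. -/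
def RobustSunflowerWithKernel {X : Type*} [Fintype X] [DecidableEq X] (p ε : ℝ)
    (F : Finset (Finset X)) (K : Finset X) : Prop :=
  K ∉ F ∧ 1 - ε ≤ coverProb p F K


section RobustSunflowerAux

variable {X : Type*} [Fintype X] [DecidableEq X]

set_option linter.unusedSectionVars false in
private lemma rsf_sum_powerset_pow (T : Finset X) (a b : ℝ) :
    ∑ S ∈ T.powerset, a ^ S.card * b ^ (T \ S).card = (a + b) ^ T.card := by
  have h := Finset.prod_add (fun _ : X => a) (fun _ : X => b) T
  simp only [Finset.prod_const] at h
  rw [← h]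

private lemma rsf_sum_subsetProb (p : ℝ) : ∑ R : Finset X, subsetProb p R = 1 := by
  have := rsf_sum_powerset_pow (Finset.univ : Finset X) p (1 - p)
  simp only [add_sub_cancel, one_pow] at this
  rw [show (∑ R : Finset X, subsetProb p R)
    = ∑ R ∈ (Finset.univ : Finset X).powerset, p ^ R.card * (1 - p) ^ (Finset.univ \ R).card by
      rw [Finset.powerset_univ]; rfl]
  exact this

private lemma rsf_subsetProb_nonneg {p : ℝ} (h0 : 0 ≤ p) (h1 : p ≤ 1) (R : Finset X) :
    0 ≤ subsetProb p R :=
  mul_nonneg (pow_nonneg h0 _) (pow_nonneg (by linarith) _)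

/-- weight relative to a sub-universe -/
private noncomputable def rsfWgt (p : ℝ) (U R : Finset X) : ℝ :=
  p ^ R.card * (1 - p) ^ (U \ R).card

set_option linter.unusedSectionVars false in
private lemma rsf_wgt_insert_left (p : ℝ) {U R : Finset X} {a : X} (ha : a ∉ U) (hR : R ⊆ U) :
    rsfWgt p (insert a U) R = (1 - p) * rsfWgt p U R := by
  have haR : a ∉ R := fun h => ha (hR h)
  have : insert a U \ R = insert a (U \ R) := by
    ext x; simp only [mem_sdiff, mem_insert]
    constructor
    · rintro ⟨h1 | h1, h2⟩
      · exact Or.inl h1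
      · exact Or.inr ⟨h1, h2⟩
    · rintro (rfl | ⟨h1, h2⟩)
      · exact ⟨Or.inl rfl, haR⟩
      · exact ⟨Or.inr h1, h2⟩
  rw [rsfWgt, rsfWgt, this,
    card_insert_of_notMem (show a ∉ U \ R from fun h => ha (mem_sdiff.mp h).1)]
  ring

set_option linter.unusedSectionVars false in
private lemma rsf_wgt_insert_both (p : ℝ) {U R : Finset X} {a : X} (ha : a ∉ U) (hR : R ⊆ U) :
    rsfWgt p (insert a U) (insert a R) = p * rsfWgt p U R := by
  have haR : a ∉ R := fun h => ha (hR h)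
  have : insert a U \ insert a R = U \ R := by
    ext x; simp only [mem_sdiff, mem_insert]
    constructor
    · rintro ⟨h1 | h1, h2⟩
      · exact absurd (Or.inl h1) h2
      · exact ⟨h1, fun hx => h2 (Or.inr hx)⟩
    · rintro ⟨h1, h2⟩
      exact ⟨Or.inr h1, by rintro (rfl | h); exact ha h1; exact h2 h⟩
  rw [rsfWgt, rsfWgt, this, card_insert_of_notMem haR]
  ring

set_option linter.unusedSectionVars false in
private lemma rsf_master_aux (p q : ℝ) (U : Finset X) :
    ∀ f : Finset X → ℝ,
    ∑ R1 ∈ U.powerset, ∑ R2 ∈ U.powerset, rsfWgt p U R1 * rsfWgt q U R2 * f (R1 ∪ R2)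
      = ∑ R ∈ U.powerset, rsfWgt (p + q - p * q) U R * f R := by
  induction U using Finset.induction_on with
  | empty => intro f; simp [rsfWgt]
  | insert a U ha ih =>
    intro f
    have key : ∀ (c d : ℝ) (g : Finset X → ℝ),
        (∑ R1 ∈ U.powerset, ∑ R2 ∈ U.powerset,
          (c * rsfWgt p U R1) * (d * rsfWgt q U R2) * g (R1 ∪ R2))
        = c * d * ∑ R ∈ U.powerset, rsfWgt (p + q - p * q) U R * g R := by
      intro c d g
      rw [← ih g, Finset.mul_sum]
      refine Finset.sum_congr rfl fun R1 _ => ?_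
      rw [Finset.mul_sum]
      refine Finset.sum_congr rfl fun R2 _ => ?_
      ring
    have split2 : ∀ g : Finset X → Finset X → ℝ,
        (∑ R1 ∈ U.powerset, ∑ R2 ∈ (insert a U).powerset, g R1 R2)
        = (∑ R1 ∈ U.powerset, ∑ R2 ∈ U.powerset, g R1 R2)
          + (∑ R1 ∈ U.powerset, ∑ R2 ∈ U.powerset, g R1 (insert a R2)) := by
      intro g
      rw [← Finset.sum_add_distrib]
      exact Finset.sum_congr rfl fun R1 _ => Finset.sum_powerset_insert ha _
    rw [Finset.sum_powerset_insert ha, split2, split2]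
    have c1 : (∑ R1 ∈ U.powerset, ∑ R2 ∈ U.powerset,
        rsfWgt p (insert a U) R1 * rsfWgt q (insert a U) R2 * f (R1 ∪ R2))
        = (1-p) * (1-q) * ∑ R ∈ U.powerset, rsfWgt (p + q - p * q) U R * f R := by
      rw [← key]
      refine Finset.sum_congr rfl fun R1 hR1 => Finset.sum_congr rfl fun R2 hR2 => ?_
      rw [rsf_wgt_insert_left p ha (mem_powerset.mp hR1),
        rsf_wgt_insert_left q ha (mem_powerset.mp hR2)]
    have c2 : (∑ R1 ∈ U.powerset, ∑ R2 ∈ U.powerset,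
        rsfWgt p (insert a U) R1 * rsfWgt q (insert a U) (insert a R2) * f (R1 ∪ insert a R2))
        = (1-p) * q * ∑ R ∈ U.powerset, rsfWgt (p + q - p * q) U R * f (insert a R) := by
      rw [← key]
      refine Finset.sum_congr rfl fun R1 hR1 => Finset.sum_congr rfl fun R2 hR2 => ?_
      rw [rsf_wgt_insert_left p ha (mem_powerset.mp hR1),
        rsf_wgt_insert_both q ha (mem_powerset.mp hR2), Finset.union_insert]
    have c3 : (∑ R1 ∈ U.powerset, ∑ R2 ∈ U.powerset,
        rsfWgt p (insert a U) (insert a R1) * rsfWgt q (insert a U) R2 * f (insert a R1 ∪ R2))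
        = p * (1-q) * ∑ R ∈ U.powerset, rsfWgt (p + q - p * q) U R * f (insert a R) := by
      rw [← key]
      refine Finset.sum_congr rfl fun R1 hR1 => Finset.sum_congr rfl fun R2 hR2 => ?_
      rw [rsf_wgt_insert_both p ha (mem_powerset.mp hR1),
        rsf_wgt_insert_left q ha (mem_powerset.mp hR2), Finset.insert_union]
    have c4 : (∑ R1 ∈ U.powerset, ∑ R2 ∈ U.powerset,
        rsfWgt p (insert a U) (insert a R1) * rsfWgt q (insert a U) (insert a R2)
          * f (insert a R1 ∪ insert a R2))
        = p * q * ∑ R ∈ U.powerset, rsfWgt (p + q - p * q) U R * f (insert a R) := by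
      rw [← key]
      refine Finset.sum_congr rfl fun R1 hR1 => Finset.sum_congr rfl fun R2 hR2 => ?_
      rw [rsf_wgt_insert_both p ha (mem_powerset.mp hR1),
        rsf_wgt_insert_both q ha (mem_powerset.mp hR2),
        Finset.insert_union, Finset.union_insert, Finset.insert_idem]
    rw [c1, c2, c3, c4]
    have d1 : (∑ R ∈ (insert a U).powerset, rsfWgt (p + q - p * q) (insert a U) R * f R)
        = (1 - (p + q - p * q)) * (∑ R ∈ U.powerset, rsfWgt (p + q - p * q) U R * f R)
          + (p + q - p * q) * ∑ R ∈ U.powerset, rsfWgt (p + q - p * q) U R * f (insert a R) := by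
      rw [Finset.sum_powerset_insert ha, Finset.mul_sum, Finset.mul_sum]
      congr 1
      · exact Finset.sum_congr rfl fun R hR => by
          rw [rsf_wgt_insert_left _ ha (mem_powerset.mp hR)]; ring
      · exact Finset.sum_congr rfl fun R hR => by
          rw [rsf_wgt_insert_both _ ha (mem_powerset.mp hR)]; ring
    rw [d1]
    ring

private lemma rsf_master (p q : ℝ) (f : Finset X → ℝ) :
    ∑ R1 : Finset X, ∑ R2 : Finset X, subsetProb p R1 * subsetProb q R2 * f (R1 ∪ R2)
      = ∑ R : Finset X, subsetProb (p + q - p * q) R * f R := by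
  have h := rsf_master_aux p q (Finset.univ : Finset X) f
  rw [Finset.powerset_univ] at h
  exact h

set_option maxHeartbeats 1000000 in
private lemma rsf_splice (p : ℝ) (Y : Finset X) (f : Finset X → ℝ) :
    ∑ R1 : Finset X, ∑ R2 : Finset X,
      subsetProb p R1 * subsetProb p R2 * f ((R1 ∩ Y) ∪ (R2 \ Y))
      = ∑ R : Finset X, subsetProb p R * f R := by
  have main : ∑ RR : Finset X × Finset X,
      subsetProb p RR.1 * subsetProb p RR.2 * f ((RR.1 ∩ Y) ∪ (RR.2 \ Y))
      = ∑ RR : Finset X × Finset X, subsetProb p RR.1 * subsetProb p RR.2 * f RR.1 := by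
    apply Finset.sum_nbij' (i := fun RR => ((RR.1 ∩ Y) ∪ (RR.2 \ Y), (RR.2 ∩ Y) ∪ (RR.1 \ Y)))
      (j := fun RR => ((RR.1 ∩ Y) ∪ (RR.2 \ Y), (RR.2 ∩ Y) ∪ (RR.1 \ Y)))
    · intro a _; exact Finset.mem_univ _
    · intro a _; exact Finset.mem_univ _
    · intro a _
      ext x <;> simp only [Prod.mk.injEq, mem_union, mem_inter, mem_sdiff] <;> tauto
    · intro a _
      ext x <;> simp only [Prod.mk.injEq, mem_union, mem_inter, mem_sdiff] <;> tauto
    · intro a _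
      have hcard : ∀ S T : Finset X, ((S ∩ Y) ∪ (T \ Y)).card = (S ∩ Y).card + (T \ Y).card :=
        fun S T => Finset.card_union_of_disjoint (by
          simp only [Finset.disjoint_left, mem_inter, mem_sdiff]; tauto)
      have hsplit : ∀ S : Finset X, (S ∩ Y).card + (S \ Y).card = S.card := fun S => by
        rw [← Finset.card_union_of_disjoint (by
          simp only [Finset.disjoint_left, mem_inter, mem_sdiff]; tauto)]
        congr 1
        ext x; simp only [mem_union, mem_inter, mem_sdiff]; tauto
      have hcompl : ∀ S : Finset X, ((Finset.univ : Finset X) \ S).card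
          = Fintype.card X - S.card := fun S => by
        rw [Finset.card_sdiff_of_subset (Finset.subset_univ S), Finset.card_univ]
      simp only [subsetProb, hcompl]
      rw [hcard, hcard]
      congr 1
      have w4 : ∀ (a b : ℝ) (c1 d1 c2 d2 : ℕ),
          a ^ c1 * b ^ d1 * (a ^ c2 * b ^ d2) = a ^ (c1 + c2) * b ^ (d1 + d2) := by
        intro a b c1 d1 c2 d2
        rw [pow_add, pow_add]; ring
      rw [w4, w4]
      have h1 := hsplit a.1
      have h2 := hsplit a.2
      have hle : ∀ S : Finset X, S.card ≤ Fintype.card X := fun S => by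
        rw [← Finset.card_univ]; exact Finset.card_le_univ S
      have e1 : (a.1 ∩ Y).card + (a.2 \ Y).card ≤ Fintype.card X := by
        rw [← hcard]; exact hle _
      have e2 : (a.2 ∩ Y).card + (a.1 \ Y).card ≤ Fintype.card X := by
        rw [← hcard]; exact hle _
      have g1 := hle a.1
      have g2 := hle a.2
      congr 2 <;> omega
  have main' := main
  simp only [Fintype.sum_prod_type] at main'
  rw [main']
  calc ∑ R1 : Finset X, ∑ R2 : Finset X, subsetProb p R1 * subsetProb p R2 * f R1
      = ∑ R1 : Finset X, subsetProb p R1 * f R1 * ∑ R2 : Finset X, subsetProb p R2 := by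
        refine Finset.sum_congr rfl fun R1 _ => ?_
        rw [Finset.mul_sum]
        exact Finset.sum_congr rfl fun R2 _ => by ring
    _ = ∑ R : Finset X, subsetProb p R * f R := by
        rw [rsf_sum_subsetProb]
        simp

/-- probability that Y ⊆ R -/
private lemma rsf_prob_superset (p : ℝ) (Y : Finset X) :
    ∑ R ∈ Finset.univ.filter (fun R : Finset X => Y ⊆ R), subsetProb p R = p ^ Y.card := by
  have hbij : ∑ R ∈ Finset.univ.filter (fun R : Finset X => Y ⊆ R), subsetProb p R
      = ∑ S ∈ ((Finset.univ : Finset X) \ Y).powerset,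
          p ^ Y.card * (p ^ S.card * (1 - p) ^ ((Finset.univ \ Y) \ S).card) := by
    apply Finset.sum_nbij' (i := fun R => R \ Y) (j := fun S => S ∪ Y)
    · intro R hR
      simp only [mem_powerset]
      intro x hx
      simp only [mem_sdiff, mem_univ, true_and] at hx ⊢
      exact hx.2
    · intro S hS
      simp only [Finset.mem_filter, mem_univ, true_and]
      exact Finset.subset_union_right
    · intro R hR
      simp only [Finset.mem_filter, mem_univ, true_and] at hR
      ext x; simp only [mem_union, mem_sdiff]
      constructor
      · rintro (⟨h1, _⟩ | h1); exact h1; exact hR h1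
      · intro h; by_cases hx : x ∈ Y; exact Or.inr hx; exact Or.inl ⟨h, hx⟩
    · intro S hS
      simp only [mem_powerset] at hS
      ext x; simp only [mem_sdiff, mem_union]
      constructor
      · rintro ⟨h1 | h1, h2⟩; exact h1; exact absurd h1 h2
      · intro h; exact ⟨Or.inl h, fun hy => (mem_sdiff.mp (hS h)).2 hy⟩
    · intro R hR
      simp only [Finset.mem_filter, mem_univ, true_and] at hR
      have hcard : R.card = (R \ Y).card + Y.card := by
        rw [← Finset.card_union_of_disjoint (Finset.sdiff_disjoint)]
        congr 1
        ext x; simp only [mem_union, mem_sdiff]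
        constructor
        · intro h; by_cases hy : x ∈ Y; exact Or.inr hy; exact Or.inl ⟨h, hy⟩
        · rintro (⟨h, _⟩ | h); exact h; exact hR h
      have hcompl : (Finset.univ : Finset X) \ R = (Finset.univ \ Y) \ (R \ Y) := by
        ext x; simp only [mem_sdiff, mem_univ, true_and]
        constructor
        · intro h; exact ⟨fun hy => h (hR hy), fun hc => h hc.1⟩
        · intro ⟨h1, h2⟩ hx; exact h1 (by by_contra hy; exact h2 ⟨hx, hy⟩)
      rw [subsetProb, hcard, hcompl, pow_add]
      ring
  rw [hbij, ← Finset.mul_sum, rsf_sum_powerset_pow, add_sub_cancel, one_pow, mul_one]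


private noncomputable def rsfInd (P : Prop) : ℝ := @ite ℝ P (Classical.propDecidable P) 1 0

private lemma rsfInd_pos {P : Prop} (h : P) : rsfInd P = 1 := by simp [rsfInd, h]

private lemma rsfInd_neg {P : Prop} (h : ¬ P) : rsfInd P = 0 := by simp [rsfInd, h]

private lemma rsfInd_nonneg (P : Prop) : 0 ≤ rsfInd P := by
  by_cases h : P
  · rw [rsfInd_pos h]; norm_num
  · rw [rsfInd_neg h]

private lemma rsfInd_le_one (P : Prop) : rsfInd P ≤ 1 := by
  by_cases h : P
  · rw [rsfInd_pos h]
  · rw [rsfInd_neg h]; norm_num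

private lemma rsfInd_mono {P Q : Prop} (h : P → Q) : rsfInd P ≤ rsfInd Q := by
  by_cases hP : P
  · rw [rsfInd_pos hP, rsfInd_pos (h hP)]
  · rw [rsfInd_neg hP]
    exact rsfInd_nonneg Q

end RobustSunflowerAux

/-- If the distinct sets `N 1, …, N k ⊆ X` form a `(p, ε)`-robust sunflower
with kernel `K = ⋂ j, N j` (where `0 < p ≤ 1/2`, `0 < ε < 1`), then for every `i` the
remaining sets form a `(2p, 2ε)`-robust sunflower with the same kernel `K`. -/
theorem stmt5 {X : Type*} [Fintype X] [DecidableEq X] (p ε : ℝ)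
    (hp : 0 < p) (hp2 : p ≤ 1 / 2) (hε : 0 < ε) (hε1 : ε < 1)
    (k : ℕ) (N : Fin k → Finset X) (hN : Function.Injective N)
    (K : Finset X) (hK : K = (Finset.univ.image N).inf id)
    (hsun : RobustSunflowerWithKernel p ε (Finset.univ.image N) K) :
    ∀ i : Fin k,
      RobustSunflowerWithKernel (2 * p) (2 * ε) ((Finset.univ.image N).erase (N i)) K := by
  classical
  intro i
  set F : Finset (Finset X) := Finset.univ.image N with hF
  set F' : Finset (Finset X) := F.erase (N i) with hF'
  have hKF : K ∉ F := hsun.1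
  have hNiF : N i ∈ F := Finset.mem_image_of_mem N (Finset.mem_univ i)
  have hKF' : K ∉ F' := fun h => hKF (Finset.mem_of_mem_erase h)
  refine ⟨hKF', ?_⟩
  -- basic facts
  have hKNi : K ⊆ N i := by
    have h : F.inf id ≤ id (N i) := Finset.inf_le hNiF
    rw [hK]
    exact h
  have hKne : K ≠ N i := fun h => hKF (h ▸ hNiF)
  set Y : Finset X := N i \ K with hY
  have hYne : Y.Nonempty := by
    rw [hY, Finset.sdiff_nonempty]
    intro h
    exact hKne (Finset.Subset.antisymm hKNi h)
  have hm1 : 1 ≤ Y.card := Finset.card_pos.mpr hYne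
  -- events
  set EA : Finset X → Prop := fun R => ∃ S ∈ F, S ⊆ R ∪ K with hEA
  set EE : Finset X → Prop := fun R => ∃ S ∈ F', S ⊆ R ∪ K with hEE
  set EB : Finset X → Prop := fun R => Y ⊆ R with hEB
  set ED : Finset X → Prop := fun R => ∃ S ∈ F', S ⊆ R ∪ N i ∪ K with hED
  -- filter sums to indicator sums
  have filter_eq : ∀ (q : ℝ) (prd : Finset X → Prop) (inst : DecidablePred prd),
      (∑ R ∈ Finset.univ.filter prd, subsetProb q R)
        = ∑ R : Finset X, subsetProb q R * rsfInd (prd R) := by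
    intro q prd inst
    rw [Finset.sum_filter]
    refine Finset.sum_congr rfl fun R _ => ?_
    by_cases h : prd R
    · rw [if_pos h, rsfInd_pos h, mul_one]
    · rw [if_neg h, rsfInd_neg h, mul_zero]
  -- probability bounds at parameter p
  have hp1 : p ≤ 1 := by linarith
  have hWnn : ∀ R : Finset X, 0 ≤ subsetProb p R :=
    rsf_subsetProb_nonneg (le_of_lt hp) hp1
  have hA : 1 - ε ≤ ∑ R : Finset X, subsetProb p R * rsfInd (EA R) := by
    have h2 := hsun.2
    unfold coverProb at h2
    calc 1 - ε ≤ ∑ R ∈ Finset.univ.filter (fun R => ∃ S ∈ F, S ⊆ R ∪ K), subsetProb p R := h2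
      _ = ∑ R : Finset X, subsetProb p R * rsfInd (EA R) := filter_eq _ _ _
  have hnA : (∑ R : Finset X, subsetProb p R * rsfInd (¬ EA R)) ≤ ε := by
    have hsplit : (∑ R : Finset X, subsetProb p R * rsfInd (EA R))
        + (∑ R : Finset X, subsetProb p R * rsfInd (¬ EA R)) = 1 := by
      rw [← Finset.sum_add_distrib, ← rsf_sum_subsetProb (X := X) p]
      refine Finset.sum_congr rfl fun R _ => ?_
      by_cases h : EA R
      · rw [rsfInd_pos h, rsfInd_neg (not_not_intro h)]; ring
      · rw [rsfInd_neg h, rsfInd_pos h]; ring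
    linarith
  have hB : (∑ R : Finset X, subsetProb p R * rsfInd (EB R)) = p ^ Y.card := by
    rw [← filter_eq p _ (fun R => inferInstanceAs (Decidable (Y ⊆ R)))]
    exact rsf_prob_superset p Y
  have hnB : (∑ R : Finset X, subsetProb p R * rsfInd (¬ EB R)) = 1 - p ^ Y.card := by
    have hsplit : (∑ R : Finset X, subsetProb p R * rsfInd (EB R))
        + (∑ R : Finset X, subsetProb p R * rsfInd (¬ EB R)) = 1 := by
      rw [← Finset.sum_add_distrib, ← rsf_sum_subsetProb (X := X) p]
      refine Finset.sum_congr rfl fun R _ => ?_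
      by_cases h : EB R
      · rw [rsfInd_pos h, rsfInd_neg (not_not_intro h)]; ring
      · rw [rsfInd_neg h, rsfInd_pos h]; ring
    linarith
  have hnD_nonneg : 0 ≤ ∑ R : Finset X, subsetProb p R * rsfInd (¬ ED R) :=
    Finset.sum_nonneg fun R _ => mul_nonneg (hWnn R) (rsfInd_nonneg _)
  -- splice bound : Pr[¬B] * Pr[¬D] ≤ Pr[¬A]
  have hsplice_logic : ∀ R1 R2 : Finset X, ¬ EB R1 → ¬ ED R2 →
      ¬ EA ((R1 ∩ Y) ∪ (R2 \ Y)) := by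
    rintro R1 R2 hB1 hD2 ⟨S, hSF, hSsub⟩
    by_cases hSN : S = N i
    · apply hB1
      intro x hx
      have hxNi : x ∈ N i := (Finset.mem_sdiff.mp hx).1
      have hxK : x ∉ K := (Finset.mem_sdiff.mp hx).2
      rcases Finset.mem_union.mp (hSsub (by rw [hSN]; exact hxNi)) with h | h
      · rcases Finset.mem_union.mp h with h' | h'
        · exact (Finset.mem_inter.mp h').1
        · exact absurd hx (Finset.mem_sdiff.mp h').2
      · exact absurd h hxK
    · apply hD2
      refine ⟨S, Finset.mem_erase.mpr ⟨hSN, hSF⟩, ?_⟩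
      intro x hx
      rcases Finset.mem_union.mp (hSsub hx) with h | h
      · rcases Finset.mem_union.mp h with h' | h'
        · have hxNi : x ∈ N i := (Finset.mem_sdiff.mp (Finset.mem_inter.mp h').2).1
          exact Finset.mem_union.mpr (Or.inl (Finset.mem_union.mpr (Or.inr hxNi)))
        · exact Finset.mem_union.mpr (Or.inl (Finset.mem_union.mpr
            (Or.inl (Finset.mem_sdiff.mp h').1)))
      · exact Finset.mem_union.mpr (Or.inr h)
  have hsplice : (1 - p ^ Y.card) * (∑ R : Finset X, subsetProb p R * rsfInd (¬ ED R)) ≤ ε := by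
    have key : (∑ R : Finset X, subsetProb p R * rsfInd (¬ EB R))
        * (∑ R : Finset X, subsetProb p R * rsfInd (¬ ED R))
        ≤ ∑ R : Finset X, subsetProb p R * rsfInd (¬ EA R) := by
      rw [Fintype.sum_mul_sum, ← rsf_splice p Y (fun R => rsfInd (¬ EA R))]
      refine Finset.sum_le_sum fun R1 _ => Finset.sum_le_sum fun R2 _ => ?_
      have hptwise : rsfInd (¬ EB R1) * rsfInd (¬ ED R2)
          ≤ rsfInd (¬ EA ((R1 ∩ Y) ∪ (R2 \ Y))) := by
        by_cases h1 : EB R1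
        · rw [rsfInd_neg (not_not_intro h1), zero_mul]
          exact rsfInd_nonneg _
        · by_cases h2 : ED R2
          · rw [rsfInd_neg (not_not_intro h2), mul_zero]
            exact rsfInd_nonneg _
          · rw [rsfInd_pos h1, rsfInd_pos h2, one_mul,
              rsfInd_pos (hsplice_logic R1 R2 h1 h2)]
      calc subsetProb p R1 * rsfInd (¬ EB R1) * (subsetProb p R2 * rsfInd (¬ ED R2))
          = subsetProb p R1 * subsetProb p R2 * (rsfInd (¬ EB R1) * rsfInd (¬ ED R2)) := by
            ring
        _ ≤ subsetProb p R1 * subsetProb p R2 * rsfInd (¬ EA ((R1 ∩ Y) ∪ (R2 \ Y))) :=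
            mul_le_mul_of_nonneg_left hptwise (mul_nonneg (hWnn R1) (hWnn R2))
    rw [← hnB]
    exact key.trans hnA
  -- p ^ |Y| is small
  have hpY : p ^ Y.card ≤ p := by
    calc p ^ Y.card ≤ p ^ 1 := pow_le_pow_of_le_one (le_of_lt hp) hp1 hm1
      _ = p := pow_one p
  have hpY2 : p ^ Y.card ≤ 1 - p ^ Y.card := by nlinarith
  have hBD : p ^ Y.card * (∑ R : Finset X, subsetProb p R * rsfInd (¬ ED R)) ≤ ε :=
    le_trans (mul_le_mul_of_nonneg_right hpY2 hnD_nonneg) hsplice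
  -- case logic for the main decomposition
  have hlogic : ∀ R1 R2 : Finset X, ¬ EE (R1 ∪ R2) →
      (¬ EA R1) ∨ (EB R1 ∧ ¬ ED R2) := by
    intro R1 R2 hE
    by_cases hA1 : EA R1
    · right
      obtain ⟨S, hSF, hSsub⟩ := hA1
      have hSN : S = N i := by
        by_contra hne
        refine hE ⟨S, Finset.mem_erase.mpr ⟨hne, hSF⟩, fun x hx => ?_⟩
        rcases Finset.mem_union.mp (hSsub hx) with h | h
        · exact Finset.mem_union.mpr (Or.inl (Finset.mem_union.mpr (Or.inl h)))
        · exact Finset.mem_union.mpr (Or.inr h)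
      have hYR1 : Y ⊆ R1 := by
        intro x hx
        have hxNi : x ∈ N i := (Finset.mem_sdiff.mp hx).1
        have hxK : x ∉ K := (Finset.mem_sdiff.mp hx).2
        rcases Finset.mem_union.mp (hSsub (by rw [hSN]; exact hxNi)) with h | h
        · exact h
        · exact absurd h hxK
      refine ⟨hYR1, ?_⟩
      rintro ⟨S', hS'F, hS'sub⟩
      apply hE
      refine ⟨S', hS'F, fun x hx => ?_⟩
      rcases Finset.mem_union.mp (hS'sub hx) with h | h
      · rcases Finset.mem_union.mp h with h' | h'
        · exact Finset.mem_union.mpr (Or.inl (Finset.mem_union.mpr (Or.inr h')))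
        · by_cases hxK : x ∈ K
          · exact Finset.mem_union.mpr (Or.inr hxK)
          · have hxY : x ∈ Y := Finset.mem_sdiff.mpr ⟨h', hxK⟩
            exact Finset.mem_union.mpr (Or.inl (Finset.mem_union.mpr (Or.inl (hYR1 hxY))))
      · exact Finset.mem_union.mpr (Or.inr h)
    · left; exact hA1
  have hpoint : ∀ R1 R2 : Finset X,
      1 - rsfInd (¬ EA R1) - rsfInd (EB R1) * rsfInd (¬ ED R2)
        ≤ rsfInd (EE (R1 ∪ R2)) := by
    intro R1 R2
    by_cases hE : EE (R1 ∪ R2)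
    · rw [rsfInd_pos hE]
      have h1 := rsfInd_nonneg (¬ EA R1)
      have h2 := mul_nonneg (rsfInd_nonneg (EB R1)) (rsfInd_nonneg (¬ ED R2))
      linarith
    · rw [rsfInd_neg hE]
      rcases hlogic R1 R2 hE with h | ⟨h1, h2⟩
      · rw [rsfInd_pos h]
        have := mul_nonneg (rsfInd_nonneg (EB R1)) (rsfInd_nonneg (¬ ED R2))
        linarith
      · rw [rsfInd_pos h1, rsfInd_pos h2, one_mul]
        have := rsfInd_nonneg (¬ EA R1)
        linarith
  -- sum at parameter q0 = 2p - p^2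
  have hq0 : 1 - 2 * ε ≤ ∑ R : Finset X, subsetProb (p + p - p * p) R * rsfInd (EE R) := by
    rw [← rsf_master p p (fun R => rsfInd (EE R))]
    have step1 : (∑ R1 : Finset X, ∑ R2 : Finset X,
        subsetProb p R1 * subsetProb p R2
          * (1 - rsfInd (¬ EA R1) - rsfInd (EB R1) * rsfInd (¬ ED R2)))
        ≤ ∑ R1 : Finset X, ∑ R2 : Finset X,
          subsetProb p R1 * subsetProb p R2 * rsfInd (EE (R1 ∪ R2)) := by
      refine Finset.sum_le_sum fun R1 _ => Finset.sum_le_sum fun R2 _ => ?_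
      exact mul_le_mul_of_nonneg_left (hpoint R1 R2) (mul_nonneg (hWnn R1) (hWnn R2))
    refine le_trans ?_ step1
    have e1 : (∑ R1 : Finset X, ∑ R2 : Finset X,
        subsetProb p R1 * subsetProb p R2) = 1 := by
      rw [← Fintype.sum_mul_sum, rsf_sum_subsetProb, one_mul]
    have e2 : (∑ R1 : Finset X, ∑ R2 : Finset X,
        subsetProb p R1 * subsetProb p R2 * rsfInd (¬ EA R1))
        = ∑ R : Finset X, subsetProb p R * rsfInd (¬ EA R) := by
      calc (∑ R1 : Finset X, ∑ R2 : Finset X,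
          subsetProb p R1 * subsetProb p R2 * rsfInd (¬ EA R1))
          = ∑ R1 : Finset X, (subsetProb p R1 * rsfInd (¬ EA R1))
            * ∑ R2 : Finset X, subsetProb p R2 := by
            refine Finset.sum_congr rfl fun R1 _ => ?_
            rw [Finset.mul_sum]
            exact Finset.sum_congr rfl fun R2 _ => by ring
        _ = ∑ R : Finset X, subsetProb p R * rsfInd (¬ EA R) := by
            rw [rsf_sum_subsetProb]
            simp
    have e3 : (∑ R1 : Finset X, ∑ R2 : Finset X,
        subsetProb p R1 * subsetProb p R2 * (rsfInd (EB R1) * rsfInd (¬ ED R2)))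
        = (∑ R : Finset X, subsetProb p R * rsfInd (EB R))
          * (∑ R : Finset X, subsetProb p R * rsfInd (¬ ED R)) := by
      rw [Fintype.sum_mul_sum]
      exact Finset.sum_congr rfl fun R1 _ => Finset.sum_congr rfl fun R2 _ => by ring
    have expand : (∑ R1 : Finset X, ∑ R2 : Finset X,
        subsetProb p R1 * subsetProb p R2
          * (1 - rsfInd (¬ EA R1) - rsfInd (EB R1) * rsfInd (¬ ED R2)))
        = 1 - (∑ R : Finset X, subsetProb p R * rsfInd (¬ EA R))
          - (∑ R : Finset X, subsetProb p R * rsfInd (EB R))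
            * (∑ R : Finset X, subsetProb p R * rsfInd (¬ ED R)) := by
      have esplit : (∑ R1 : Finset X, ∑ R2 : Finset X,
          subsetProb p R1 * subsetProb p R2
            * (1 - rsfInd (¬ EA R1) - rsfInd (EB R1) * rsfInd (¬ ED R2)))
          = (∑ R1 : Finset X, ∑ R2 : Finset X, subsetProb p R1 * subsetProb p R2)
            - (∑ R1 : Finset X, ∑ R2 : Finset X,
                subsetProb p R1 * subsetProb p R2 * rsfInd (¬ EA R1))
            - (∑ R1 : Finset X, ∑ R2 : Finset X,
                subsetProb p R1 * subsetProb p R2 * (rsfInd (EB R1) * rsfInd (¬ ED R2))) := by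
        rw [← Finset.sum_sub_distrib, ← Finset.sum_sub_distrib]
        refine Finset.sum_congr rfl fun R1 _ => ?_
        rw [← Finset.sum_sub_distrib, ← Finset.sum_sub_distrib]
        exact Finset.sum_congr rfl fun R2 _ => by ring
      rw [esplit, e1, e2, e3]
    rw [expand, hB]
    linarith
  -- monotonicity from q0 = 2p - p² up to 2p
  have h1p : (0:ℝ) < 1 - p := by linarith
  have h1p' : (1:ℝ) - p ≠ 0 := ne_of_gt h1p
  set s : ℝ := (p / (1 - p)) ^ 2 with hs
  have hs0 : 0 ≤ s := sq_nonneg _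
  have hs1 : s ≤ 1 := by
    rw [hs]
    have hd0 : 0 ≤ p / (1 - p) := div_nonneg (le_of_lt hp) (le_of_lt h1p)
    have hd1 : p / (1 - p) ≤ 1 := by
      rw [div_le_one h1p]; linarith
    nlinarith
  have hq0s : (p + p - p * p) + s - (p + p - p * p) * s = 2 * p := by
    rw [hs]
    field_simp
    ring
  have hq0W : ∀ R : Finset X, 0 ≤ subsetProb (p + p - p * p) R :=
    rsf_subsetProb_nonneg (by nlinarith) (by nlinarith)
  have hsW : ∀ R : Finset X, 0 ≤ subsetProb s R := rsf_subsetProb_nonneg hs0 hs1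
  have hmono : (∑ R : Finset X, subsetProb (p + p - p * p) R * rsfInd (EE R))
      ≤ ∑ R : Finset X, subsetProb (2 * p) R * rsfInd (EE R) := by
    have hmaster := rsf_master (p + p - p * p) s (fun R => rsfInd (EE R))
    rw [hq0s] at hmaster
    rw [← hmaster]
    have step : (∑ R1 : Finset X, ∑ R2 : Finset X,
        subsetProb (p + p - p * p) R1 * subsetProb s R2 * rsfInd (EE R1))
        ≤ ∑ R1 : Finset X, ∑ R2 : Finset X,
          subsetProb (p + p - p * p) R1 * subsetProb s R2 * rsfInd (EE (R1 ∪ R2)) := by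
      refine Finset.sum_le_sum fun R1 _ => Finset.sum_le_sum fun R2 _ => ?_
      refine mul_le_mul_of_nonneg_left ?_ (mul_nonneg (hq0W R1) (hsW R2))
      refine rsfInd_mono ?_
      rintro ⟨S, hS, hsub⟩
      refine ⟨S, hS, fun x hx => ?_⟩
      rcases Finset.mem_union.mp (hsub hx) with h | h
      · exact Finset.mem_union.mpr (Or.inl (Finset.mem_union.mpr (Or.inl h)))
      · exact Finset.mem_union.mpr (Or.inr h)
    refine le_trans (le_of_eq ?_) step
    calc (∑ R : Finset X, subsetProb (p + p - p * p) R * rsfInd (EE R))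
        = ∑ R1 : Finset X, (subsetProb (p + p - p * p) R1 * rsfInd (EE R1))
          * ∑ R2 : Finset X, subsetProb s R2 := by
          rw [rsf_sum_subsetProb]
          simp
      _ = ∑ R1 : Finset X, ∑ R2 : Finset X,
          subsetProb (p + p - p * p) R1 * subsetProb s R2 * rsfInd (EE R1) := by
          refine Finset.sum_congr rfl fun R1 _ => ?_
          rw [Finset.mul_sum]
          exact Finset.sum_congr rfl fun R2 _ => by ring
  -- conclude
  unfold coverProb
  have hfinal : (∑ R ∈ Finset.univ.filter (fun R => ∃ S ∈ F', S ⊆ R ∪ K),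
      subsetProb (2 * p) R) = ∑ R : Finset X, subsetProb (2 * p) R * rsfInd (EE R) :=
    filter_eq _ _ _
  rw [hfinal]
  linarith [le_trans hq0 hmono]
end

section
/- Let k ≥ 1 and 0 < ε < 1, and suppose that the distinct sets N_1, …, N_m ⊆ X form a (1/(2k), ε)-robust sunflower with kernel K. Let R be a uniformly random subset of X (each element included independently with probability 1/2). Then Pr[ ∃ a set I ⊆ [m] with |I| = k such that N_i ⊆ R for all i ∈ I │ K ⊆ R ] ≥ 1 − εk. -/
open Finset

lemma sum_pow_card {X : Type*} [DecidableEq X] (s : Finset X) (p q : ℝ) :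
    ∑ t ∈ s.powerset, p ^ t.card * q ^ (s \ t).card = (p + q) ^ s.card := by
  have h := Finset.prod_add (fun _ : X => p) (fun _ : X => q) s
  simp only [prod_const] at h
  rw [← h]

lemma subsetProb_union {X : Type*} [Fintype X] [DecidableEq X] (p : ℝ) {K A B : Finset X}
    (hA : A ⊆ univ \ K) (hB : B ⊆ K) :
    subsetProb p (A ∪ B) =
      (p ^ A.card * (1 - p) ^ ((univ \ K) \ A).card) *
      (p ^ B.card * (1 - p) ^ (K \ B).card) := by
  have hAK : ∀ x ∈ A, x ∉ K := fun x hx => (Finset.mem_sdiff.1 (hA hx)).2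
  have hdisj : Disjoint A B := by
    rw [Finset.disjoint_left]
    exact fun x hx hx' => hAK x hx (hB hx')
  have hcard : (A ∪ B).card = A.card + B.card := Finset.card_union_of_disjoint hdisj
  have hset : (univ : Finset X) \ (A ∪ B) = ((univ \ K) \ A) ∪ (K \ B) := by
    ext x
    simp only [Finset.mem_sdiff, Finset.mem_union, Finset.mem_univ, true_and]
    by_cases hxK : x ∈ K
    · have hxA : x ∉ A := fun h => hAK x h hxK
      tauto
    · have hxB : x ∉ B := fun h => hxK (hB h)
      tauto
  have hdisj2 : Disjoint ((univ \ K) \ A) (K \ B) := by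
    rw [Finset.disjoint_left]
    intro x hx hx'
    exact (Finset.mem_sdiff.1 (Finset.mem_sdiff.1 hx).1).2 (Finset.mem_sdiff.1 hx').1
  have hcard2 : ((univ : Finset X) \ (A ∪ B)).card = ((univ \ K) \ A).card + (K \ B).card := by
    rw [hset, Finset.card_union_of_disjoint hdisj2]
  rw [subsetProb, hcard, hcard2, pow_add, pow_add]
  ring

lemma sum_subsetProb_decomp {X : Type*} [Fintype X] [DecidableEq X] (p : ℝ) (K : Finset X)
    (Q : Finset X → Prop) [DecidablePred Q] (hQ : ∀ R, Q R ↔ Q (R \ K)) :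
    ∑ R ∈ univ.filter Q, subsetProb p R
      = ∑ A ∈ (univ \ K).powerset.filter Q,
          p ^ A.card * (1 - p) ^ ((univ \ K) \ A).card := by
  have key : ∑ R ∈ univ.filter Q, subsetProb p R
      = ∑ AB ∈ ((univ \ K).powerset.filter Q) ×ˢ K.powerset,
          (p ^ AB.1.card * (1 - p) ^ ((univ \ K) \ AB.1).card) *
          (p ^ AB.2.card * (1 - p) ^ (K \ AB.2).card) := by
    apply Finset.sum_nbij' (i := fun R => (R \ K, R ∩ K)) (j := fun AB => AB.1 ∪ AB.2)
    · intro R hR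
      simp only [Finset.mem_filter, Finset.mem_univ, true_and] at hR
      simp only [Finset.mem_product, Finset.mem_powerset, Finset.mem_filter]
      refine ⟨⟨?_, (hQ R).1 hR⟩, Finset.inter_subset_right⟩
      intro x hx
      simp only [Finset.mem_sdiff, Finset.mem_univ, true_and]
      exact (Finset.mem_sdiff.1 hx).2
    · intro AB hAB
      simp only [Finset.mem_product, Finset.mem_powerset, Finset.mem_filter] at hAB
      simp only [Finset.mem_filter, Finset.mem_univ, true_and]
      rw [hQ]
      have : (AB.1 ∪ AB.2) \ K = AB.1 := by
        ext x
        simp only [Finset.mem_sdiff, Finset.mem_union]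
        constructor
        · rintro ⟨h1 | h1, h2⟩
          · exact h1
          · exact absurd (hAB.2 h1) h2
        · intro h
          exact ⟨Or.inl h, (Finset.mem_sdiff.1 (hAB.1.1 h)).2⟩
      rw [this]
      have hA := hAB.1.2
      rwa [hQ, Finset.sdiff_eq_self_of_disjoint] at hA
      rw [Finset.disjoint_left]
      exact fun x hx hx' => (Finset.mem_sdiff.1 (hAB.1.1 hx)).2 hx'
    · intro R hR
      simp only
      rw [Finset.sdiff_union_inter]
    · intro AB hAB
      simp only [Finset.mem_product, Finset.mem_powerset, Finset.mem_filter] at hAB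
      have h1 : (AB.1 ∪ AB.2) \ K = AB.1 := by
        ext x
        simp only [Finset.mem_sdiff, Finset.mem_union]
        constructor
        · rintro ⟨h1 | h1, h2⟩
          · exact h1
          · exact absurd (hAB.2 h1) h2
        · intro h
          exact ⟨Or.inl h, (Finset.mem_sdiff.1 (hAB.1.1 h)).2⟩
      have h2 : (AB.1 ∪ AB.2) ∩ K = AB.2 := by
        ext x
        simp only [Finset.mem_inter, Finset.mem_union]
        constructor
        · rintro ⟨h1 | h1, h2⟩
          · exact absurd h2 (Finset.mem_sdiff.1 (hAB.1.1 h1)).2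
          · exact h1
        · intro h
          exact ⟨Or.inr h, hAB.2 h⟩
      exact Prod.ext h1 h2
    · intro R hR
      have hA : R \ K ⊆ univ \ K := by
        intro x hx
        simp only [Finset.mem_sdiff, Finset.mem_univ, true_and]
        exact (Finset.mem_sdiff.1 hx).2
      have hB : R ∩ K ⊆ K := Finset.inter_subset_right
      rw [← subsetProb_union p hA hB, Finset.sdiff_union_inter]
  rw [key, Finset.sum_product]
  apply Finset.sum_congr rfl
  intro A hA
  simp only
  rw [← Finset.mul_sum]
  have : ∑ B ∈ K.powerset, p ^ B.card * (1 - p) ^ (K \ B).card = 1 := by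
    rw [sum_pow_card]
    norm_num
  rw [this, mul_one]


lemma card_filter_pi {X : Type*} [Fintype X] [DecidableEq X] {n : ℕ}
    (t : X → Finset (Fin n)) (P : (X → Fin n) → Prop) [DecidablePred P]
    (hP : ∀ f, P f ↔ ∀ x, f x ∈ t x) :
    (univ.filter P).card = ∏ x, (t x).card := by
  rw [← Fintype.card_piFinset]
  congr 1
  ext f
  simp [Fintype.mem_piFinset, hP]

lemma card_filter_lt (k : ℕ) :
    ((univ : Finset (Fin (2*k))).filter (fun j : Fin (2*k) => (j : ℕ) < k)).card = k := by
  have h : ∀ a ∈ Finset.range k, a < 2*k := fun a ha => by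
    have := Finset.mem_range.1 ha; omega
  have : (univ : Finset (Fin (2*k))).filter (fun j : Fin (2*k) => (j : ℕ) < k)
      = (Finset.range k).attachFin h := by
    ext a; simp [Finset.mem_attachFin, Finset.mem_range]
  rw [this, Finset.card_attachFin, Finset.card_range]

lemma card_filter_not_lt (k : ℕ) :
    ((univ : Finset (Fin (2*k))).filter (fun j : Fin (2*k) => k ≤ (j : ℕ))).card = k := by
  have heq : ((univ : Finset (Fin (2*k))).filter (fun j : Fin (2*k) => k ≤ (j : ℕ)))
      = ((univ : Finset (Fin (2*k))).filter (fun j : Fin (2*k) => ¬ (j : ℕ) < k)) := by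
    apply Finset.filter_congr; intro j _; simp [Nat.not_lt]
  rw [heq]
  have h := Finset.card_filter_add_card_filter_not
    (s := (univ : Finset (Fin (2*k)))) (p := fun j : Fin (2*k) => (j : ℕ) < k)
  rw [card_filter_lt] at h
  simp only [Finset.card_univ, Fintype.card_fin] at h
  omega

lemma prod_piecewise_card {X : Type*} [Fintype X] [DecidableEq X] (K : Finset X)
    (c : X → ℕ) (a b : ℕ) (hK : ∀ x ∈ K, c x = a) (hK' : ∀ x ∈ univ \ K, c x = b) :
    ∏ x, c x = a ^ K.card * b ^ (univ \ K).card := by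
  rw [← Finset.prod_sdiff (Finset.subset_univ K)]
  rw [Finset.prod_congr rfl hK', Finset.prod_congr rfl hK, Finset.prod_const,
    Finset.prod_const, mul_comm]

lemma card_fiber_Phi {X : Type*} [Fintype X] [DecidableEq X] (k : ℕ)
    (K R : Finset X) (hKR : K ⊆ R) :
    (univ.filter (fun f : X → Fin (2*k) =>
        (K ∪ univ.filter (fun x => ((f x : ℕ) < k))) = R)).card
      = (2*k) ^ K.card * k ^ (univ \ K).card := by
  classical
  set t : X → Finset (Fin (2*k)) := fun x =>
    if x ∈ K then univ
    else if x ∈ R then univ.filter (fun j : Fin (2*k) => (j : ℕ) < k)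
    else univ.filter (fun j : Fin (2*k) => ¬ (j : ℕ) < k) with ht
  rw [card_filter_pi t]
  · apply prod_piecewise_card
    · intro x hx
      simp [ht, hx, Finset.card_univ]
    · intro x hx
      have hxK : x ∉ K := (Finset.mem_sdiff.1 hx).2
      by_cases hxR : x ∈ R <;>
        simp [ht, hxK, hxR, card_filter_lt, card_filter_not_lt, Nat.not_lt]
  · intro f
    rw [Finset.ext_iff]
    constructor
    · intro h x
      have hx := h x
      simp only [Finset.mem_union, Finset.mem_filter, Finset.mem_univ, true_and] at hx
      by_cases hxK : x ∈ K
      · simp [ht, hxK]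
      · by_cases hxR : x ∈ R <;> simp only [ht, hxK, hxR, if_true, if_false,
          Finset.mem_filter, Finset.mem_univ, true_and] <;> tauto
    · intro h x
      have hx := h x
      simp only [Finset.mem_union, Finset.mem_filter, Finset.mem_univ, true_and]
      by_cases hxK : x ∈ K
      · simp [hxK, hKR hxK]
      · by_cases hxR : x ∈ R <;> simp only [ht, hxK, hxR, if_true, if_false,
          Finset.mem_filter, Finset.mem_univ, true_and] at hx <;> tauto

lemma card_fiber_Psi {X : Type*} [Fintype X] [DecidableEq X] (k : ℕ) (hk : 1 ≤ k)
    (K A : Finset X) (hA : A ⊆ univ \ K) (i : Fin (2*k)) :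
    (univ.filter (fun f : X → Fin (2*k) =>
        univ.filter (fun x => x ∉ K ∧ f x = i) = A)).card
      = (2*k) ^ K.card * (2*k-1) ^ ((univ \ K) \ A).card := by
  classical
  set t : X → Finset (Fin (2*k)) := fun x =>
    if x ∈ K then univ
    else if x ∈ A then {i}
    else univ.erase i with ht
  have hcard : ∏ x, (t x).card = (2*k) ^ K.card * (2*k-1) ^ ((univ \ K) \ A).card := by
    rw [← Finset.prod_sdiff (Finset.subset_univ K)]
    have h1 : ∏ x ∈ K, (t x).card = (2*k) ^ K.card := by
      apply Finset.prod_eq_pow_card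
      intro x hx
      simp [ht, hx, Finset.card_univ]
    have h2 : ∏ x ∈ univ \ K, (t x).card = (2*k-1) ^ ((univ \ K) \ A).card := by
      rw [← Finset.prod_sdiff hA]
      have h3 : ∏ x ∈ A, (t x).card = 1 := by
        apply Finset.prod_eq_one
        intro x hx
        have hxK : x ∉ K := (Finset.mem_sdiff.1 (hA hx)).2
        simp [ht, hxK, hx]
      have h4 : ∏ x ∈ (univ \ K) \ A, (t x).card = (2*k-1) ^ ((univ \ K) \ A).card := by
        apply Finset.prod_eq_pow_card
        intro x hx
        have hxK : x ∉ K := (Finset.mem_sdiff.1 (Finset.mem_sdiff.1 hx).1).2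
        have hxA : x ∉ A := (Finset.mem_sdiff.1 hx).2
        simp [ht, hxK, hxA, Finset.card_erase_of_mem, Finset.card_univ]
      rw [h3, h4, mul_one]
    rw [h1, h2, mul_comm]
  rw [← hcard]
  apply card_filter_pi
  intro f
  rw [Finset.ext_iff]
  constructor
  · intro h x
    have hx := h x
    simp only [Finset.mem_filter, Finset.mem_univ, true_and] at hx
    by_cases hxK : x ∈ K
    · simp [ht, hxK]
    · by_cases hxA : x ∈ A
      · simp only [ht, hxK, hxA, if_true, if_false, Finset.mem_singleton]
        tauto
      · simp only [ht, hxK, hxA, if_true, if_false, Finset.mem_erase, Finset.mem_univ,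
          and_true]
        tauto
  · intro h x
    have hx := h x
    simp only [Finset.mem_filter, Finset.mem_univ, true_and]
    by_cases hxK : x ∈ K
    · have hxA : x ∉ A := fun h' => (Finset.mem_sdiff.1 (hA h')).2 hxK
      tauto
    · by_cases hxA : x ∈ A
      · simp only [ht, hxK, hxA, if_true, if_false, Finset.mem_singleton] at hx
        tauto
      · simp only [ht, hxK, hxA, if_true, if_false, Finset.mem_erase, Finset.mem_univ,
          and_true] at hx
        tauto

/-- If the distinct sets `N 1, …, N m ⊆ X` form a `(1/(2k), ε)`-robust
sunflower with kernel `K = ⋂ j, N j` (where `k ≥ 1`, `0 < ε < 1`) and `R` is a uniformly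
random subset of `X`, then conditioned on `K ⊆ R`, with probability at least `1 - εk` there
are `k` of the sets `N i` all contained in `R`. -/
theorem stmt6 {X : Type*} [Fintype X] [DecidableEq X] (ε : ℝ) (hε : 0 < ε) (hε1 : ε < 1)
    (k m : ℕ) (hk : 1 ≤ k) (N : Fin m → Finset X) (hN : Function.Injective N)
    (K : Finset X) (hK : K = (Finset.univ.image N).inf id)
    (hsun : RobustSunflowerWithKernel (1 / (2 * (k : ℝ))) ε (Finset.univ.image N) K) :
    1 - ε * k ≤
      (((Finset.univ : Finset (Finset X)).filter (fun R => K ⊆ R ∧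
          ∃ I : Finset (Fin m), I.card = k ∧ ∀ i ∈ I, N i ⊆ R)).card : ℝ) /
        (((Finset.univ : Finset (Finset X)).filter (fun R => K ⊆ R)).card : ℝ) := by
  classical
  obtain ⟨hKF, hcov⟩ := hsun
  set F : Finset (Finset X) := Finset.univ.image N with hF
  set p : ℝ := 1 / (2 * (k : ℝ)) with hp
  have hk0 : (0:ℝ) < (k:ℝ) := by exact_mod_cast Nat.lt_of_lt_of_le Nat.zero_lt_one hk
  have h2k0 : (0:ℝ) < 2 * (k:ℝ) := by linarith
  have hp0 : 0 < p := by rw [hp]; positivity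
  -- kernel facts
  have hKsub : ∀ j, K ⊆ N j := by
    intro j
    have h := Finset.inf_le (f := id) (Finset.mem_image_of_mem N (Finset.mem_univ j))
    rw [← hK] at h
    exact h
  have hNK : ∀ j, N j ≠ K := fun j h =>
    hKF (h ▸ Finset.mem_image_of_mem N (Finset.mem_univ j))
  -- Step C: the p-biased "bad" probability is at most ε, in decomposed form
  have hQiff : ∀ R : Finset X, (¬ ∃ S ∈ F, S ⊆ R ∪ K) ↔ (¬ ∃ S ∈ F, S ⊆ (R \ K) ∪ K) := by
    intro R; rw [Finset.sdiff_union_self_eq_union]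
  have htotal : ∑ R ∈ (Finset.univ : Finset (Finset X)), subsetProb p R = 1 := by
    rw [← Finset.powerset_univ]
    have h := sum_pow_card (Finset.univ : Finset X) p (1-p)
    simp only [subsetProb]
    rw [h]
    norm_num
  have hbad : ∑ R ∈ Finset.univ.filter (fun R => ¬ ∃ S ∈ F, S ⊆ R ∪ K),
      subsetProb p R ≤ ε := by
    have hsplit := Finset.sum_filter_add_sum_filter_not (Finset.univ : Finset (Finset X))
      (fun R => ∃ S ∈ F, S ⊆ R ∪ K) (subsetProb p)
    rw [htotal] at hsplit
    have hc : coverProb p F K = ∑ R ∈ Finset.univ.filter (fun R => ∃ S ∈ F, S ⊆ R ∪ K),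
        subsetProb p R := rfl
    rw [← hc] at hsplit
    linarith
  have hbadA : ∑ A ∈ ((Finset.univ \ K).powerset.filter (fun A => ¬ ∃ S ∈ F, S ⊆ A ∪ K)),
      p ^ A.card * (1 - p) ^ ((Finset.univ \ K) \ A).card ≤ ε := by
    rw [← sum_subsetProb_decomp p K _ hQiff]
    exact hbad
  -- real-valued total count
  set T : ℝ := (2 * (k:ℝ)) ^ (Fintype.card X) with hT
  have hTpos : 0 < T := by rw [hT]; positivity
  -- per-A identity between fiber counts and biased probabilities
  have hterm : ∀ A ∈ (Finset.univ \ K).powerset,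
      (((2*k) ^ K.card * (2*k-1) ^ ((Finset.univ \ K) \ A).card : ℕ) : ℝ)
        = T * (p ^ A.card * (1 - p) ^ ((Finset.univ \ K) \ A).card) := by
    intro A hA
    have hAsub : A ⊆ Finset.univ \ K := Finset.mem_powerset.1 hA
    have hcards : K.card + (A.card + ((Finset.univ \ K) \ A).card) = Fintype.card X := by
      have h1 : ((Finset.univ \ K) \ A).card = (Finset.univ \ K).card - A.card :=
        Finset.card_sdiff_of_subset hAsub
      have h2 : ((Finset.univ : Finset X) \ K).card = Fintype.card X - K.card := by
        rw [Finset.card_sdiff_of_subset (Finset.subset_univ K), Finset.card_univ]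
      have h3 : A.card ≤ (Finset.univ \ K).card := Finset.card_le_card hAsub
      have h4 : K.card ≤ Fintype.card X := by
        rw [← Finset.card_univ]; exact Finset.card_le_card (Finset.subset_univ K)
      omega
    have hK1 : (2*(k:ℝ)) * p = 1 := by
      rw [hp]; field_simp
    have hK2 : (2*(k:ℝ)) * (1 - p) = ((2*k-1 : ℕ) : ℝ) := by
      have hcast : ((2*k-1 : ℕ) : ℝ) = 2*(k:ℝ) - 1 := by
        have h1 : 1 ≤ 2*k := by omega
        push_cast [h1]
        ring
      rw [hcast, hp]
      field_simp
    set a := A.card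
    set b := ((Finset.univ \ K) \ A).card
    have e1 : (2*(k:ℝ))^a * p^a = 1 := by rw [← mul_pow, hK1, one_pow]
    have e2 : (2*(k:ℝ))^b * (1-p)^b = ((2*k-1 : ℕ) : ℝ)^b := by rw [← mul_pow, hK2]
    have hTsplit : T = (2*(k:ℝ))^K.card * ((2*(k:ℝ))^a * (2*(k:ℝ))^b) := by
      rw [hT, ← hcards, pow_add, pow_add]
    calc (((2*k) ^ K.card * (2*k-1) ^ b : ℕ) : ℝ)
        = (2*(k:ℝ))^K.card * ((2*k-1 : ℕ) : ℝ)^b := by push_cast; ring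
      _ = (2*(k:ℝ))^K.card * ((2*(k:ℝ))^a * p^a) * ((2*(k:ℝ))^b * (1-p)^b) := by
          rw [e1, e2]; ring
      _ = T * (p ^ a * (1 - p) ^ b) := by rw [hTsplit]; ring
  -- the bad event for each colour
  set Psi : Fin (2*k) → (X → Fin (2*k)) → Finset X :=
    fun i f => Finset.univ.filter (fun x => x ∉ K ∧ f x = i) with hPsi
  have hBad : ∀ i : Fin (2*k),
      ((Finset.univ.filter (fun f : X → Fin (2*k) =>
          ¬ ∃ S ∈ F, S ⊆ Psi i f ∪ K)).card : ℝ) ≤ ε * T := by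
    intro i
    have hPsisub : ∀ f, Psi i f ⊆ Finset.univ \ K := by
      intro f x hx
      rw [hPsi] at hx
      simp only [Finset.mem_filter, Finset.mem_univ, true_and] at hx
      simp only [Finset.mem_sdiff, Finset.mem_univ, true_and]
      exact hx.1
    have hmem : ∀ f ∈ Finset.univ.filter (fun f : X → Fin (2*k) =>
        ¬ ∃ S ∈ F, S ⊆ Psi i f ∪ K),
        Psi i f ∈ (Finset.univ \ K).powerset.filter (fun A => ¬ ∃ S ∈ F, S ⊆ A ∪ K) := by
      intro f hf
      simp only [Finset.mem_filter, Finset.mem_univ, true_and] at hf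
      simp only [Finset.mem_filter, Finset.mem_powerset]
      exact ⟨hPsisub f, hf⟩
    have hfib := Finset.card_eq_sum_card_fiberwise hmem
    have hfib2 : ∀ A ∈ (Finset.univ \ K).powerset.filter (fun A => ¬ ∃ S ∈ F, S ⊆ A ∪ K),
        ((Finset.univ.filter (fun f : X → Fin (2*k) => ¬ ∃ S ∈ F, S ⊆ Psi i f ∪ K)).filter
            (fun f => Psi i f = A)).card
          = (2*k) ^ K.card * (2*k-1) ^ ((Finset.univ \ K) \ A).card := by
      intro A hA
      have hAprop := (Finset.mem_filter.1 hA).2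
      have hAsub := Finset.mem_powerset.1 (Finset.mem_filter.1 hA).1
      have heq : (Finset.univ.filter (fun f : X → Fin (2*k) =>
          ¬ ∃ S ∈ F, S ⊆ Psi i f ∪ K)).filter (fun f => Psi i f = A)
          = Finset.univ.filter (fun f : X → Fin (2*k) => Psi i f = A) := by
        ext f
        simp only [Finset.mem_filter, Finset.mem_univ, true_and]
        constructor
        · exact fun h => h.2
        · intro h
          exact ⟨by rw [h]; exact hAprop, h⟩
      rw [heq, hPsi]
      exact card_fiber_Psi k hk K A hAsub i
    have hcount : ((Finset.univ.filter (fun f : X → Fin (2*k) =>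
        ¬ ∃ S ∈ F, S ⊆ Psi i f ∪ K)).card : ℝ)
        = ∑ A ∈ (Finset.univ \ K).powerset.filter (fun A => ¬ ∃ S ∈ F, S ⊆ A ∪ K),
            T * (p ^ A.card * (1 - p) ^ ((Finset.univ \ K) \ A).card) := by
      rw [hfib]
      push_cast
      apply Finset.sum_congr rfl
      intro A hA
      rw [← hterm A (Finset.mem_filter.1 hA).1, ← hfib2 A hA]
    rw [hcount, ← Finset.mul_sum]
    calc T * ∑ A ∈ (Finset.univ \ K).powerset.filter (fun A => ¬ ∃ S ∈ F, S ⊆ A ∪ K),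
            p ^ A.card * (1 - p) ^ ((Finset.univ \ K) \ A).card
        ≤ T * ε := by
          apply mul_le_mul_of_nonneg_left hbadA hTpos.le
      _ = ε * T := mul_comm _ _
  -- colours
  set colors : Finset (Fin (2*k)) :=
    Finset.univ.filter (fun j : Fin (2*k) => (j : ℕ) < k) with hcolors
  have hcolcard : colors.card = k := card_filter_lt k
  -- all-good event
  set AllGood : Finset (X → Fin (2*k)) :=
    Finset.univ.filter (fun f => ∀ i ∈ colors, ∃ S ∈ F, S ⊆ Psi i f ∪ K) with hAllGood
  have hTnat : (((2*k) ^ (Fintype.card X) : ℕ) : ℝ) = T := by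
    rw [hT]; push_cast; ring
  have hAllGoodT : T - ε * k * T ≤ (AllGood.card : ℝ) := by
    have hsplit := Finset.card_filter_add_card_filter_not
      (s := (Finset.univ : Finset (X → Fin (2*k))))
      (p := fun f => ∀ i ∈ colors, ∃ S ∈ F, S ⊆ Psi i f ∪ K)
    rw [Finset.card_univ] at hsplit
    have hcardfun : Fintype.card (X → Fin (2*k)) = (2*k) ^ (Fintype.card X) := by
      rw [Fintype.card_fun, Fintype.card_fin]
    rw [hcardfun] at hsplit
    have hsubun : Finset.univ.filter (fun f : X → Fin (2*k) =>
          ¬ ∀ i ∈ colors, ∃ S ∈ F, S ⊆ Psi i f ∪ K)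
        ⊆ colors.biUnion (fun i => Finset.univ.filter (fun f : X → Fin (2*k) =>
          ¬ ∃ S ∈ F, S ⊆ Psi i f ∪ K)) := by
      intro f hf
      simp only [Finset.mem_filter, Finset.mem_univ, true_and] at hf
      push_neg at hf
      obtain ⟨i, hi, hbadf⟩ := hf
      rw [Finset.mem_biUnion]
      refine ⟨i, hi, Finset.mem_filter.2 ⟨Finset.mem_univ f, ?_⟩⟩
      push_neg
      exact hbadf
    have hcnot : ((Finset.univ.filter (fun f : X → Fin (2*k) =>
        ¬ ∀ i ∈ colors, ∃ S ∈ F, S ⊆ Psi i f ∪ K)).card : ℝ) ≤ ε * k * T := by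
      calc ((Finset.univ.filter (fun f : X → Fin (2*k) =>
            ¬ ∀ i ∈ colors, ∃ S ∈ F, S ⊆ Psi i f ∪ K)).card : ℝ)
          ≤ ((colors.biUnion (fun i => Finset.univ.filter (fun f : X → Fin (2*k) =>
              ¬ ∃ S ∈ F, S ⊆ Psi i f ∪ K))).card : ℝ) := by
            exact_mod_cast Finset.card_le_card hsubun
        _ ≤ ((∑ i ∈ colors, (Finset.univ.filter (fun f : X → Fin (2*k) =>
              ¬ ∃ S ∈ F, S ⊆ Psi i f ∪ K)).card : ℕ) : ℝ) := by
            exact_mod_cast Finset.card_biUnion_le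
        _ = ∑ i ∈ colors, ((Finset.univ.filter (fun f : X → Fin (2*k) =>
              ¬ ∃ S ∈ F, S ⊆ Psi i f ∪ K)).card : ℝ) := by push_cast; rfl
        _ ≤ ∑ i ∈ colors, ε * T := Finset.sum_le_sum (fun i _ => hBad i)
        _ = colors.card * (ε * T) := by rw [Finset.sum_const, nsmul_eq_mul]
        _ = ε * k * T := by rw [hcolcard]; ring
    have hcast : ((AllGood.card : ℕ) : ℝ)
        + ((Finset.univ.filter (fun f : X → Fin (2*k) =>
            ¬ ∀ i ∈ colors, ∃ S ∈ F, S ⊆ Psi i f ∪ K)).card : ℝ) = T := by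
      rw [← hTnat]
      exact_mod_cast congrArg (Nat.cast : ℕ → ℝ) hsplit
    linarith
  -- the map from colourings to sets
  set Phi : (X → Fin (2*k)) → Finset X :=
    fun f => K ∪ Finset.univ.filter (fun x => ((f x : ℕ) < k)) with hPhi
  have hKPhi : ∀ f, K ⊆ Phi f := fun f => Finset.subset_union_left
  -- good event on colourings
  set Good : Finset (X → Fin (2*k)) :=
    Finset.univ.filter (fun f => K ⊆ Phi f ∧
      ∃ I : Finset (Fin m), I.card = k ∧ ∀ i ∈ I, N i ⊆ Phi f) with hGood
  -- Step D : AllGood ⊆ Good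
  have hAG : AllGood ⊆ Good := by
    intro f hf
    rw [hAllGood, Finset.mem_filter] at hf
    replace hf := hf.2
    rw [hGood, Finset.mem_filter]
    refine ⟨Finset.mem_univ f, hKPhi f, ?_⟩
    -- obtain an inhabitant of `Fin m`
    have h0k : (0 : ℕ) < 2*k := by omega
    have h0col : (⟨0, h0k⟩ : Fin (2*k)) ∈ colors := by
      rw [hcolors, Finset.mem_filter]
      exact ⟨Finset.mem_univ _, hk⟩
    obtain ⟨S0, hS0F, -⟩ := hf _ h0col
    rw [hF] at hS0F
    obtain ⟨j0, -, rfl⟩ := Finset.mem_image.1 hS0F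
    -- choose for each colour a set of the family inside `Psi i f ∪ K`
    have hch : ∀ i : Fin (2*k), ∃ j : Fin m, (i ∈ colors → N j ⊆ Psi i f ∪ K) := by
      intro i
      by_cases hi : i ∈ colors
      · obtain ⟨S, hSF, hSsub⟩ := hf i hi
        rw [hF] at hSF
        obtain ⟨j, -, rfl⟩ := Finset.mem_image.1 hSF
        exact ⟨j, fun _ => hSsub⟩
      · exact ⟨j0, fun h => absurd h hi⟩
    choose g hg using hch
    -- witnesses in the petal minus the kernel
    have hwit : ∀ i ∈ colors, ∃ x, x ∈ N (g i) \ K := by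
      intro i hi
      have h1 : K ⊆ N (g i) := hKsub _
      have h2 : N (g i) ≠ K := hNK _
      exact Finset.sdiff_nonempty.2 (fun h => h2 (Finset.Subset.antisymm h h1))
    have hxPsi : ∀ i ∈ colors, ∀ x ∈ N (g i) \ K, x ∈ Psi i f := by
      intro i hi x hx
      rcases Finset.mem_union.1 ((hg i hi) (Finset.mem_sdiff.1 hx).1) with h | h
      · exact h
      · exact absurd h (Finset.mem_sdiff.1 hx).2
    have hinj : Set.InjOn g colors := by
      intro i hi i' hi' hgg
      obtain ⟨x, hx⟩ := hwit i hi
      have hx1 : x ∈ Psi i f := hxPsi i hi x hx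
      have hx2 : x ∈ Psi i' f := hxPsi i' hi' x (by rwa [hgg] at hx)
      rw [hPsi] at hx1 hx2
      simp only [Finset.mem_filter, Finset.mem_univ, true_and] at hx1 hx2
      rw [← hx1.2, ← hx2.2]
    refine ⟨colors.image g, ?_, ?_⟩
    · rw [Finset.card_image_of_injOn hinj, hcolcard]
    · intro j hj
      obtain ⟨i, hi, rfl⟩ := Finset.mem_image.1 hj
      intro x hx
      rcases Finset.mem_union.1 ((hg i hi) hx) with h | h
      · rw [hPsi] at h
        simp only [Finset.mem_filter, Finset.mem_univ, true_and] at h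
        have hik : (i : ℕ) < k := by
          rw [hcolors, Finset.mem_filter] at hi
          exact hi.2
        rw [hPhi]
        exact Finset.mem_union.2 (Or.inr (Finset.mem_filter.2
          ⟨Finset.mem_univ x, by rw [h.2]; exact hik⟩))
      · exact (hKPhi f) h
  -- Step A: fiber counting over Phi
  set Num : Finset (Finset X) := Finset.univ.filter (fun R : Finset X => K ⊆ R ∧
      ∃ I : Finset (Fin m), I.card = k ∧ ∀ i ∈ I, N i ⊆ R) with hNumDef
  set Den : Finset (Finset X) := Finset.univ.filter (fun R : Finset X => K ⊆ R) with hDenDef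
  set c : ℕ := (2*k) ^ K.card * k ^ ((Finset.univ : Finset X) \ K).card with hc
  have hfibPhi : ∀ R : Finset X, K ⊆ R →
      (Finset.univ.filter (fun f : X → Fin (2*k) => Phi f = R)).card = c := by
    intro R hKR
    rw [hPhi, hc]
    exact card_fiber_Phi k K R hKR
  have hGoodcount : Good.card = Num.card * c := by
    have hmem : ∀ f ∈ Good, Phi f ∈ Num := by
      intro f hfm
      rw [hGood, Finset.mem_filter] at hfm
      rw [hNumDef, Finset.mem_filter]
      exact ⟨Finset.mem_univ _, hfm.2⟩
    rw [Finset.card_eq_sum_card_fiberwise hmem]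
    rw [Finset.sum_congr rfl (fun R hR => ?_), Finset.sum_const, smul_eq_mul, mul_comm]
    have hKR : K ⊆ R := ((Finset.mem_filter.1 hR).2).1
    have hProp : K ⊆ R ∧ ∃ I : Finset (Fin m), I.card = k ∧ ∀ i ∈ I, N i ⊆ R :=
      (Finset.mem_filter.1 hR).2
    have heq : Good.filter (fun f => Phi f = R)
        = Finset.univ.filter (fun f : X → Fin (2*k) => Phi f = R) := by
      ext f
      rw [hGood]
      simp only [Finset.mem_filter, Finset.mem_univ, true_and]
      constructor
      · exact fun h => h.2
      · intro h
        exact ⟨by rw [h]; exact hProp, h⟩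
    rw [heq, hfibPhi R hKR]
  have hDencount : Den.card * c = (2*k) ^ (Fintype.card X) := by
    have hmem : ∀ f ∈ (Finset.univ : Finset (X → Fin (2*k))), Phi f ∈ Den := by
      intro f _
      rw [hDenDef, Finset.mem_filter]
      exact ⟨Finset.mem_univ _, hKPhi f⟩
    have h := Finset.card_eq_sum_card_fiberwise hmem
    rw [Finset.card_univ, Fintype.card_fun, Fintype.card_fin] at h
    rw [Finset.sum_congr rfl (fun R hR => hfibPhi R (Finset.mem_filter.1 hR).2),
      Finset.sum_const, smul_eq_mul] at h
    exact h.symm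
  -- final arithmetic
  have hc0 : 0 < c := by
    rw [hc]
    have hk' : 0 < k := hk
    positivity
  have hcR : (0:ℝ) < (c:ℝ) := by exact_mod_cast hc0
  have hDencountR : (Den.card : ℝ) * (c:ℝ) = T := by
    rw [← hTnat]
    exact_mod_cast congrArg (Nat.cast : ℕ → ℝ) hDencount
  have hDenpos : (0:ℝ) < (Den.card : ℝ) := by
    by_contra h
    push_neg at h
    have : (Den.card : ℝ) * (c:ℝ) ≤ 0 := mul_nonpos_of_nonpos_of_nonneg h hcR.le
    linarith
  have hGoodcountR : (Good.card : ℝ) = (Num.card : ℝ) * (c:ℝ) := by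
    exact_mod_cast congrArg (Nat.cast : ℕ → ℝ) hGoodcount
  have hAGcard : (AllGood.card : ℝ) ≤ (Good.card : ℝ) := by
    exact_mod_cast Finset.card_le_card hAG
  rw [div_eq_mul_inv, ← ge_iff_le]
  rw [ge_iff_le, ← sub_nonneg]
  have key : (1 - ε * k) * (Den.card : ℝ) ≤ (Num.card : ℝ) := by
    have key2 : ((1 - ε * k) * (Den.card : ℝ)) * (c:ℝ) ≤ (Num.card : ℝ) * (c:ℝ) := by
      calc ((1 - ε * k) * (Den.card : ℝ)) * (c:ℝ)
          = (1 - ε * k) * ((Den.card : ℝ) * (c:ℝ)) := by ring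
        _ = (1 - ε * k) * T := by rw [hDencountR]
        _ = T - ε * k * T := by ring
        _ ≤ (AllGood.card : ℝ) := hAllGoodT
        _ ≤ (Good.card : ℝ) := hAGcard
        _ = (Num.card : ℝ) * (c:ℝ) := hGoodcountR
    exact le_of_mul_le_mul_right key2 hcR
  have : (1 - ε * k) ≤ (Num.card : ℝ) * ((Den.card : ℝ))⁻¹ := by
    rw [← div_eq_mul_inv, le_div_iff₀ hDenpos]
    exact key
  linarith
end

section
/- For every ε > 0 there exists δ > 0 such that for all n and all k with 1 ≤ k ≤ δ·n, and every set S ⊆ {0, 1, …, k} with k ∈ S, the statistical distance satisfies Δ(U_k^n, U_S^n) ≤ ε. Moreover, Δ(U_k^n, U_S^n) equals (∑_{i ∈ S, i ≠ k} C(n,i)) / (∑_{i ∈ S} C(n,i)), where C(n,i) denotes the binomial coefficient. -/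
open Finset

/-- Hamming weight of a bit string. -/
def wt {n : ℕ} (x : Fin n → Bool) : ℕ := (Finset.univ.filter fun i => x i = true).card

/-- Binary decision trees querying input bits. -/
inductive DTree (m : ℕ) : Type
  | leaf : Bool → DTree m
  | node : Fin m → DTree m → DTree m → DTree m

def DTree.eval {m : ℕ} : DTree m → (Fin m → Bool) → Bool
  | .leaf b, _ => b
  | .node i t0 t1, y => if y i then t1.eval y else t0.eval y

def DTree.depth {m : ℕ} : DTree m → ℕ
  | .leaf _ => 0
  | .node _ t0 t1 => max t0.depth t1.depth + 1

/-- `f` has decision depth `d`: every output bit is computed by a depth-`≤ d` decision tree. -/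
def hasDecisionDepth {m n : ℕ} (f : (Fin m → Bool) → (Fin n → Bool)) (d : ℕ) : Prop :=
  ∀ j : Fin n, ∃ t : DTree m, t.depth ≤ d ∧ ∀ y, f y j = t.eval y

/-- The mass function of the distribution `f(Y)` for `Y` uniform on `{0,1}^m`. -/
noncomputable def srcDist {m n : ℕ} (f : (Fin m → Bool) → (Fin n → Bool)) :
    (Fin n → Bool) → ℝ :=
  fun x => ((Finset.univ.filter fun y => f y = x).card : ℝ) / 2 ^ m

/-- The mass function of the uniform distribution on Hamming-weight-`k` strings. -/
noncomputable def uniformSlice (n k : ℕ) : (Fin n → Bool) → ℝ :=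
  fun x => if wt x = k then 1 / (n.choose k : ℝ) else 0

/-- Statistical distance between two mass functions: `max_A |P(A) - Q(A)|`. -/
noncomputable def SD {α : Type*} [Fintype α] (P Q : α → ℝ) : ℝ :=
  ⨆ A : Finset α, |∑ x ∈ A, P x - ∑ x ∈ A, Q x|

/-- The mass function of the uniform distribution on strings whose Hamming weight lies
in the set `S`. -/
noncomputable def uniformWeights (n : ℕ) (S : Finset ℕ) : (Fin n → Bool) → ℝ :=
  fun x => if wt x ∈ S then 1 / ((∑ i ∈ S, n.choose i : ℕ) : ℝ) else 0


lemma wt_card (n k : ℕ) :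
    (Finset.univ.filter fun x : Fin n → Bool => wt x = k).card = n.choose k := by
  have h : (Finset.univ.filter fun x : Fin n → Bool => wt x = k).card
      = (Finset.powersetCard k (Finset.univ : Finset (Fin n))).card := by
    apply Finset.card_bij' (fun x (_ : x ∈ Finset.univ.filter fun x : Fin n → Bool => wt x = k) => Finset.univ.filter fun i => x i = true)
      (fun s _ => fun i => decide (i ∈ s))
    · intro x hx
      simp only [Finset.mem_filter, Finset.mem_univ, true_and, wt] at hx
      simp [Finset.mem_powersetCard, hx]
      exact (Finset.mem_filter.mp hx).2
    · intro s hs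
      simp only [Finset.mem_powersetCard] at hs
      show (fun i => decide (i ∈ s)) ∈ Finset.univ.filter (fun x : Fin n → Bool => wt x = k)
      refine Finset.mem_filter.mpr ⟨Finset.mem_univ _, ?_⟩
      unfold wt
      rw [← hs.2]; congr 1; ext i; simp
    · intro x _; funext i; simp
    · intro s _; ext i; simp
  rw [h, Finset.card_powersetCard, Finset.card_univ, Fintype.card_fin]

lemma wt_card_mem (n : ℕ) (S : Finset ℕ) :
    (Finset.univ.filter fun x : Fin n → Bool => wt x ∈ S).card = ∑ i ∈ S, n.choose i := by
  rw [Finset.card_eq_sum_card_fiberwise (s := Finset.univ.filter fun x : Fin n → Bool => wt x ∈ S) (f := wt) (t := S)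
      (fun x hx => (Finset.mem_filter.mp hx).2)]
  refine Finset.sum_congr rfl fun i hi => ?_
  rw [Finset.filter_filter, ← wt_card n i]
  congr 1
  ext x
  simp only [Finset.mem_filter, Finset.mem_univ, true_and]
  constructor
  · exact fun h => h.2
  · exact fun h => ⟨h ▸ hi, h⟩

lemma choose_decay (n k : ℕ) (hkn : k ≤ n) :
    ∀ j, j ≤ k → (n.choose (k - j) : ℝ) ≤ n.choose k * ((k : ℝ) / ((n : ℝ) - k + 1)) ^ j := by
  have hknR : (k:ℝ) ≤ n := by exact_mod_cast hkn
  have hd : (0:ℝ) < (n : ℝ) - k + 1 := by linarith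
  have hr0 : (0:ℝ) ≤ (k : ℝ) / ((n : ℝ) - k + 1) := by positivity
  intro j
  induction j with
  | zero => intro _; simp
  | succ j ih =>
    intro hj
    have hj' : j ≤ k := Nat.le_of_succ_le hj
    have ihe := ih hj'
    set m := k - (j + 1) with hm
    have hmk : m + 1 = k - j := by omega
    have hmn : m ≤ n := by omega
    have hid := Nat.choose_succ_right_eq n m
    have hidR : (n.choose (m+1) : ℝ) * ((m:ℝ)+1) = (n.choose m : ℝ) * ((n:ℝ) - m) := by
      have := congrArg (Nat.cast (R := ℝ)) hid
      push_cast [Nat.cast_sub hmn] at this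
      linarith
    have hmub : (m:ℝ) + 1 ≤ k := by
      have h1 : m + 1 ≤ k := by omega
      exact_mod_cast h1
    have hstep : (n.choose m : ℝ) ≤ (n.choose (k - j) : ℝ) * ((k : ℝ) / ((n : ℝ) - k + 1)) := by
      rw [← hmk, ← mul_div_assoc, le_div_iff₀ hd]
      have hmkR : (m:ℝ) ≤ k := by linarith
      have h1 : (n.choose m : ℝ) * ((n:ℝ) - k + 1) ≤ (n.choose m : ℝ) * ((n:ℝ) - m) := by
        apply mul_le_mul_of_nonneg_left _ (by positivity)
        linarith
      have h2 : (n.choose (m+1) : ℝ) * ((m:ℝ)+1) ≤ (n.choose (m+1) : ℝ) * k :=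
        mul_le_mul_of_nonneg_left hmub (by positivity)
      linarith
    calc (n.choose m : ℝ) ≤ (n.choose (k - j) : ℝ) * ((k : ℝ) / ((n : ℝ) - k + 1)) := hstep
      _ ≤ (n.choose k * ((k : ℝ) / ((n : ℝ) - k + 1)) ^ j) * ((k : ℝ) / ((n : ℝ) - k + 1)) :=
          mul_le_mul_of_nonneg_right ihe hr0
      _ = n.choose k * ((k : ℝ) / ((n : ℝ) - k + 1)) ^ (j+1) := by ring

lemma sum_choose_le (n k : ℕ) (hkn : k ≤ n) (hr : (k:ℝ)/((n:ℝ) - k + 1) ≤ 1/2) :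
    (∑ i ∈ Finset.range k, (n.choose i : ℝ)) ≤
      n.choose k * (2 * ((k:ℝ) / ((n:ℝ) - k + 1))) := by
  set r := (k:ℝ)/((n:ℝ) - k + 1) with hrdef
  have hknR : (k:ℝ) ≤ n := by exact_mod_cast hkn
  have hd : (0:ℝ) < (n : ℝ) - k + 1 := by linarith
  have hr0 : (0:ℝ) ≤ r := by positivity
  have h1 : (∑ i ∈ Finset.range k, (n.choose i : ℝ)) = ∑ j ∈ Finset.range k, (n.choose (k - (j+1)) : ℝ) := by
    rw [← Finset.sum_range_reflect (fun i => (n.choose i : ℝ)) k]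
    refine Finset.sum_congr rfl fun j hj => ?_
    have he : k - 1 - j = k - (j + 1) := by omega
    rw [he]
  rw [h1]
  have h2 : ∑ j ∈ Finset.range k, (n.choose (k - (j+1)) : ℝ) ≤
      ∑ j ∈ Finset.range k, (n.choose k : ℝ) * r ^ (j+1) := by
    refine Finset.sum_le_sum fun j hj => ?_
    exact choose_decay n k hkn (j+1) (Finset.mem_range.mp hj)
  refine h2.trans ?_
  have h3 : ∑ j ∈ Finset.range k, (n.choose k : ℝ) * r ^ (j+1)
      = (n.choose k : ℝ) * r * ∑ j ∈ Finset.range k, r ^ j := by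
    rw [Finset.mul_sum]
    refine Finset.sum_congr rfl fun j hj => ?_
    ring
  rw [h3]
  have hgeom : ∑ j ∈ Finset.range k, r ^ j ≤ 2 := by
    have hg := geom_sum_mul r k
    have hpk : (0:ℝ) ≤ r ^ k := by positivity
    have hsnn : (0:ℝ) ≤ ∑ j ∈ Finset.range k, r ^ j :=
      Finset.sum_nonneg fun j _ => by positivity
    nlinarith [hg]
  have hcnn : (0:ℝ) ≤ (n.choose k : ℝ) * r := by positivity
  nlinarith [mul_le_mul_of_nonneg_left hgeom hcnn]

lemma SD_eq (n k : ℕ) (S : Finset ℕ) (hkn : k ≤ n) (hkS : k ∈ S) :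
    SD (uniformSlice n k) (uniformWeights n S) =
      ((∑ i ∈ S.erase k, n.choose i : ℕ) : ℝ) / ((∑ i ∈ S, n.choose i : ℕ) : ℝ) := by
  set N := n.choose k with hNdef
  set T := ∑ i ∈ S, n.choose i with hTdef
  set M := ∑ i ∈ S.erase k, n.choose i with hMdef
  have hTMN : M + N = T := Finset.sum_erase_add S _ hkS
  have hN : 0 < N := Nat.choose_pos hkn
  have hT : 0 < T := lt_of_lt_of_le hN (by omega)
  have hNR : (0:ℝ) < N := by exact_mod_cast hN
  have hTR : (0:ℝ) < T := by exact_mod_cast hT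
  have hNTR : (N:ℝ) ≤ T := by exact_mod_cast (by omega : N ≤ T)
  have hTMNR : (M:ℝ) + N = T := by exact_mod_cast hTMN
  set P := uniformSlice n k
  set Q := uniformWeights n S
  have hPQmax : ∀ x : Fin n → Bool, max (P x - Q x) 0 = if wt x = k then 1/(N:ℝ) - 1/(T:ℝ) else 0 := by
    intro x
    by_cases h : wt x = k
    · have hQ : Q x = 1/(T:ℝ) := by simp [Q, uniformWeights, h, hkS, hTdef]
      have hP : P x = 1/(N:ℝ) := by simp [P, uniformSlice, h, hNdef]
      rw [hP, hQ, if_pos h, max_eq_left]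
      have := one_div_le_one_div_of_le hNR hNTR
      linarith
    · have hP : P x = 0 := by simp [P, uniformSlice, h]
      rw [hP, if_neg h, max_eq_right]
      have : 0 ≤ Q x := by
        simp only [Q, uniformWeights]
        split
        · positivity
        · exact le_rfl
      linarith
  have hQPmax : ∀ x : Fin n → Bool, max (Q x - P x) 0 = if wt x ∈ S.erase k then 1/(T:ℝ) else 0 := by
    intro x
    by_cases h : wt x = k
    · have hQ : Q x = 1/(T:ℝ) := by simp [Q, uniformWeights, h, hkS, hTdef]
      have hP : P x = 1/(N:ℝ) := by simp [P, uniformSlice, h, hNdef]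
      have hnm : wt x ∉ S.erase k := by simp [h]
      rw [hP, hQ, if_neg hnm, max_eq_right]
      have := one_div_le_one_div_of_le hNR hNTR
      linarith
    · have hP : P x = 0 := by simp [P, uniformSlice, h]
      by_cases h2 : wt x ∈ S
      · have hQ : Q x = 1/(T:ℝ) := by simp [Q, uniformWeights, h2, hTdef]
        have hmem : wt x ∈ S.erase k := Finset.mem_erase.mpr ⟨h, h2⟩
        rw [hP, hQ, if_pos hmem, max_eq_left (by rw [sub_zero]; positivity)]
        ring
      · have hQ : Q x = 0 := by simp [Q, uniformWeights, h2]
        have hnm : wt x ∉ S.erase k := fun hc => h2 (Finset.mem_of_mem_erase hc)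
        rw [hP, hQ, if_neg hnm]
        simp
  have hsumP : ∑ x : Fin n → Bool, max (P x - Q x) 0 = (M:ℝ)/(T:ℝ) := by
    rw [Finset.sum_congr rfl fun x _ => hPQmax x, ← Finset.sum_filter, Finset.sum_const,
      wt_card n k, nsmul_eq_mul]
    have hM : (M:ℝ) = (T:ℝ) - N := by linarith
    show (N:ℝ) * (1/(N:ℝ) - 1/(T:ℝ)) = (M:ℝ)/(T:ℝ)
    rw [hM]
    field_simp
  have hsumQ : ∑ x : Fin n → Bool, max (Q x - P x) 0 = (M:ℝ)/(T:ℝ) := by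
    rw [Finset.sum_congr rfl fun x _ => hQPmax x, ← Finset.sum_filter, Finset.sum_const,
      wt_card_mem n (S.erase k), nsmul_eq_mul]
    ring
  have hub : ∀ A : Finset (Fin n → Bool), |∑ x ∈ A, P x - ∑ x ∈ A, Q x| ≤ (M:ℝ)/(T:ℝ) := by
    intro A
    rw [abs_sub_le_iff]
    constructor
    · rw [← Finset.sum_sub_distrib]
      calc ∑ x ∈ A, (P x - Q x) ≤ ∑ x ∈ A, max (P x - Q x) 0 :=
            Finset.sum_le_sum fun x _ => le_max_left _ _
        _ ≤ ∑ x : Fin n → Bool, max (P x - Q x) 0 :=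
            Finset.sum_le_sum_of_subset_of_nonneg (Finset.subset_univ A)
              (fun x _ _ => le_max_right _ _)
        _ = (M:ℝ)/(T:ℝ) := hsumP
    · rw [← Finset.sum_sub_distrib]
      calc ∑ x ∈ A, (Q x - P x) ≤ ∑ x ∈ A, max (Q x - P x) 0 :=
            Finset.sum_le_sum fun x _ => le_max_left _ _
        _ ≤ ∑ x : Fin n → Bool, max (Q x - P x) 0 :=
            Finset.sum_le_sum_of_subset_of_nonneg (Finset.subset_univ A)
              (fun x _ _ => le_max_right _ _)
        _ = (M:ℝ)/(T:ℝ) := hsumQ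
  have hK : |∑ x ∈ (Finset.univ.filter fun x : Fin n → Bool => wt x = k), P x
      - ∑ x ∈ (Finset.univ.filter fun x : Fin n → Bool => wt x = k), Q x| = (M:ℝ)/(T:ℝ) := by
    have hPK : ∑ x ∈ (Finset.univ.filter fun x : Fin n → Bool => wt x = k), P x = 1 := by
      rw [Finset.sum_congr rfl (fun x hx => by
        have := (Finset.mem_filter.mp hx).2
        show P x = 1/(N:ℝ)
        simp [P, uniformSlice, this, hNdef]), Finset.sum_const, wt_card n k, nsmul_eq_mul]
      field_simp
      rfl
    have hQK : ∑ x ∈ (Finset.univ.filter fun x : Fin n → Bool => wt x = k), Q x = (N:ℝ)/(T:ℝ) := by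
      rw [Finset.sum_congr rfl (fun x hx => by
        have := (Finset.mem_filter.mp hx).2
        show Q x = 1/(T:ℝ)
        simp [Q, uniformWeights, this, hkS, hTdef]), Finset.sum_const, wt_card n k, nsmul_eq_mul]
      ring
    rw [hPK, hQK, abs_of_nonneg (by rw [sub_nonneg, div_le_one hTR]; exact hNTR)]
    field_simp
    linarith
  have hbdd : BddAbove (Set.range fun A : Finset (Fin n → Bool) =>
      |∑ x ∈ A, P x - ∑ x ∈ A, Q x|) := Set.Finite.bddAbove (Set.finite_range _)
  apply le_antisymm
  · exact ciSup_le hub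
  · rw [← hK]
    exact le_ciSup hbdd _

/-- For every `ε > 0` there is `δ > 0` such that for all `n`, all
`1 ≤ k ≤ δn`, and every `S ⊆ {0, …, k}` with `k ∈ S`, we have `Δ(U_k^n, U_S^n) ≤ ε`;
moreover `Δ(U_k^n, U_S^n) = (∑_{i ∈ S, i ≠ k} C(n,i)) / (∑_{i ∈ S} C(n,i))`. -/
theorem stmt10 :
    ∀ ε : ℝ, 0 < ε → ∃ δ : ℝ, 0 < δ ∧ ∀ (n k : ℕ) (S : Finset ℕ),
      1 ≤ k → (k : ℝ) ≤ δ * n → S ⊆ Finset.range (k + 1) → k ∈ S →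
      SD (uniformSlice n k) (uniformWeights n S) ≤ ε ∧
      SD (uniformSlice n k) (uniformWeights n S) =
        ((∑ i ∈ S.erase k, n.choose i : ℕ) : ℝ) / ((∑ i ∈ S, n.choose i : ℕ) : ℝ) := by
  intro ε hε
  refine ⟨min (1/3) (ε/3), lt_min (by norm_num) (by positivity), ?_⟩
  intro n k S hk1 hkδ hS hkS
  set δ := min (1/3 : ℝ) (ε/3) with hδdef
  have hδ1 : δ ≤ 1/3 := min_le_left _ _
  have hδε : δ ≤ ε/3 := min_le_right _ _
  have hδ0 : 0 < δ := lt_min (by norm_num) (by positivity)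
  have hkR : (1:ℝ) ≤ k := by exact_mod_cast hk1
  have hnn : (0:ℝ) ≤ n := Nat.cast_nonneg n
  have hkn3 : (k:ℝ) ≤ (n:ℝ)/3 := by
    have := mul_le_mul_of_nonneg_right hδ1 hnn
    calc (k:ℝ) ≤ δ * n := hkδ
      _ ≤ (1/3) * n := this
      _ = (n:ℝ)/3 := by ring
  have hn3 : (3:ℝ) ≤ n := by linarith
  have hknR : (k:ℝ) ≤ n := by linarith
  have hkn : k ≤ n := by exact_mod_cast hknR
  set r := (k:ℝ)/((n:ℝ) - k + 1) with hrdef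
  have hdpos : (0:ℝ) < (n:ℝ) - k + 1 := by linarith
  have hr_bound : r ≤ (3/2) * δ := by
    have hden : (2/3 : ℝ) * n ≤ (n:ℝ) - k + 1 := by linarith
    have hden0 : (0:ℝ) < (2/3 : ℝ) * n := by linarith
    calc r ≤ (δ * n) / ((2/3 : ℝ) * n) := by
          apply div_le_div₀ (by positivity) hkδ hden0 hden
      _ = (3/2) * δ := by
          field_simp
  have hr_half : r ≤ 1/2 := by linarith
  have hr0 : (0:ℝ) ≤ r := by positivity
  have heq := SD_eq n k S hkn hkS
  refine ⟨?_, heq⟩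
  rw [heq]
  set N := n.choose k with hNdef
  set T := ∑ i ∈ S, n.choose i with hTdef
  set M := ∑ i ∈ S.erase k, n.choose i with hMdef
  have hN : 0 < N := Nat.choose_pos hkn
  have hNT : N ≤ T := Finset.single_le_sum (fun i _ => Nat.zero_le _) hkS
  have hT : 0 < T := lt_of_lt_of_le hN hNT
  have hNR : (0:ℝ) < N := by exact_mod_cast hN
  have hTR : (0:ℝ) < T := by exact_mod_cast hT
  have hNTR : (N:ℝ) ≤ T := by exact_mod_cast hNT
  have hsub : S.erase k ⊆ Finset.range k := by
    intro i hi
    have h1 := Finset.mem_of_mem_erase hi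
    have h2 := Finset.ne_of_mem_erase hi
    have h3 := Finset.mem_range.mp (hS h1)
    exact Finset.mem_range.mpr (by omega)
  have hM_le : (M:ℝ) ≤ (N:ℝ) * (2 * r) := by
    have h1 : M ≤ ∑ i ∈ Finset.range k, n.choose i :=
      Finset.sum_le_sum_of_subset hsub
    have h2 : (M:ℝ) ≤ ∑ i ∈ Finset.range k, (n.choose i : ℝ) := by
      rw [← Nat.cast_sum]
      exact_mod_cast h1
    exact h2.trans (sum_choose_le n k hkn hr_half)
  calc (M:ℝ) / T ≤ (M:ℝ) / N := by
        apply div_le_div_of_nonneg_left _ hNR hNTR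
        positivity
    _ ≤ 2 * r := by
        rw [div_le_iff₀ hNR]
        linarith
    _ ≤ 3 * δ := by linarith
    _ ≤ ε := by linarith
end

section
/- Let α, β ∈ (0,1) and let C ⊆ {0,1}^n satisfy |C| ≥ 2^{αn} and the property that any two distinct elements of C are at Hamming distance at least βn. If f : {0,1}^m → {0,1}^n is a d-local function with f({0,1}^m) = C, then d ≥ αβn. -/
open Finset

/-- Input bit `i` affects output bit `j` of `f`. -/
def Affects {m n : ℕ} (f : (Fin m → Bool) → (Fin n → Bool)) (i : Fin m) (j : Fin n) : Prop :=
  ∃ x : Fin m → Bool, f x j ≠ f (Function.update x i (!(x i))) j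

instance {m n : ℕ} (f : (Fin m → Bool) → (Fin n → Bool)) (i : Fin m) (j : Fin n) :
    Decidable (Affects f i j) := by unfold Affects; infer_instance

/-- The set of input bits that output bit `j` depends on. -/
def inputsOf {m n : ℕ} (f : (Fin m → Bool) → (Fin n → Bool)) (j : Fin n) : Finset (Fin m) :=
  Finset.univ.filter fun i => Affects f i j

/-- The set of output bits affected by input bit `i`. -/
def outputsOf {m n : ℕ} (f : (Fin m → Bool) → (Fin n → Bool)) (i : Fin m) : Finset (Fin n) :=
  Finset.univ.filter fun j => Affects f i j

/-- `f` is `d`-local: each output bit depends on at most `d` input bits. -/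
def IsLocal {m n : ℕ} (f : (Fin m → Bool) → (Fin n → Bool)) (d : ℕ) : Prop :=
  ∀ j : Fin n, (inputsOf f j).card ≤ d

lemma aux_dist_le {m n : ℕ} (f : (Fin m → Bool) → (Fin n → Bool)) (i : Fin m)
    (x : Fin m → Bool) (b : Bool) :
    hammingDist (f x) (f (Function.update x i b)) ≤ (outputsOf f i).card := by
  rw [hammingDist]
  apply Finset.card_le_card
  intro j hj
  simp only [Finset.mem_filter, Finset.mem_univ, true_and] at hj ⊢
  unfold outputsOf
  simp only [Finset.mem_filter, Finset.mem_univ, true_and]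
  exact ⟨x, by
    by_cases hb : b = x i
    · exfalso; rw [hb, Function.update_eq_self] at hj; exact hj rfl
    · have hb' : b = !(x i) := by cases b <;> cases hx : x i <;> simp_all
      rw [← hb']; exact hj⟩

lemma aux_determined {m n : ℕ} (f : (Fin m → Bool) → (Fin n → Bool)) (H : Finset (Fin m))
    (hfix : ∀ i ∉ H, ∀ x b, f (Function.update x i b) = f x) :
    ∀ y y', (∀ i ∈ H, y i = y' i) → f y = f y' := by
  have key : ∀ s : Finset (Fin m), ∀ y y' : Fin m → Bool,
      (∀ i, i ∉ s → y i = y' i) → (∀ i ∈ s, i ∉ H) → f y = f y' := by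
    intro s
    induction s using Finset.induction_on with
    | empty =>
      exact fun y y' h _ => congrArg f (funext fun i => h i (by simp))
    | @insert a s ha ih =>
      intro y y' h hH
      have h1 : f y = f (Function.update y' a (y a)) := by
        apply ih
        · intro i hi
          by_cases hia : i = a
          · subst hia; simp
          · rw [Function.update_of_ne hia]
            exact h i (by simp [hia, hi])
        · exact fun i hi => hH i (Finset.mem_insert_of_mem hi)
      rw [h1, hfix a (hH a (Finset.mem_insert_self a s))]
  intro y y' hagree
  exact key Hᶜ y y' (fun i hi => hagree i (by simpa using hi)) (fun i hi => by simpa using hi)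

/-- If `C ⊆ {0,1}^n` is a code with `|C| ≥ 2^{αn}` and minimum Hamming
distance `≥ βn` (with `α, β ∈ (0,1)`), then any `d`-local `f : {0,1}^m → {0,1}^n` whose
image is exactly `C` satisfies `d ≥ αβn`. -/
theorem stmt11 (α β : ℝ) (hα : 0 < α) (hα1 : α < 1) (hβ : 0 < β) (hβ1 : β < 1)
    (n m d : ℕ) (C : Finset (Fin n → Bool))
    (hsize : (2 : ℝ) ^ (α * (n : ℝ)) ≤ (C.card : ℝ))
    (hdist : ∀ x ∈ C, ∀ y ∈ C, x ≠ y → β * (n : ℝ) ≤ (hammingDist x y : ℝ))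
    (f : (Fin m → Bool) → (Fin n → Bool)) (hloc : IsLocal f d)
    (himg : ∀ x : Fin n → Bool, x ∈ C ↔ ∃ y, f y = x) :
    α * β * (n : ℝ) ≤ (d : ℝ) := by
  classical
  set H : Finset (Fin m) :=
    Finset.univ.filter (fun i => β * (n : ℝ) ≤ ((outputsOf f i).card : ℝ)) with hHdef
  -- light inputs don't change f
  have hfix : ∀ i ∉ H, ∀ x b, f (Function.update x i b) = f x := by
    intro i hi x b
    have hlight : ((outputsOf f i).card : ℝ) < β * n := by
      by_contra hcon
      exact hi (Finset.mem_filter.2 ⟨Finset.mem_univ i, le_of_not_gt hcon⟩)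
    by_contra hne
    have h1 : f x ∈ C := (himg _).2 ⟨x, rfl⟩
    have h2 : f (Function.update x i b) ∈ C := (himg _).2 ⟨_, rfl⟩
    have hd : β * n ≤ (hammingDist (f x) (f (Function.update x i b)) : ℝ) :=
      hdist _ h1 _ h2 (fun he => hne he.symm)
    have hle := aux_dist_le f i x b
    have : β * n < β * n := lt_of_le_of_lt (hd.trans (by exact_mod_cast hle)) hlight
    exact lt_irrefl _ this
  have hdet := aux_determined f H hfix
  -- |C| ≤ 2 ^ |H|
  have hCle : C.card ≤ 2 ^ H.card := by
    have hex : ∀ c : {c // c ∈ C}, ∃ y, f y = c.1 := fun c => (himg c.1).1 c.2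
    choose g hg using hex
    have hinj : Function.Injective (fun c : {c // c ∈ C} => fun i : H => g c i.1) := by
      intro c1 c2 h
      apply Subtype.ext
      rw [← hg c1, ← hg c2]
      exact hdet _ _ (fun i hi => congrFun h ⟨i, hi⟩)
    calc C.card = Fintype.card {c // c ∈ C} := (Fintype.card_coe C).symm
      _ ≤ Fintype.card (H → Bool) := Fintype.card_le_of_injective _ hinj
      _ = 2 ^ H.card := by simp [Fintype.card_fun]
  -- α n ≤ |H|
  have hαn : α * n ≤ (H.card : ℝ) := by
    have h1 : (2:ℝ) ^ (α * (n:ℝ)) ≤ (2:ℝ) ^ ((H.card : ℝ)) := by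
      calc (2:ℝ) ^ (α * (n:ℝ)) ≤ (C.card : ℝ) := hsize
        _ ≤ ((2 ^ H.card : ℕ) : ℝ) := by exact_mod_cast hCle
        _ = (2:ℝ) ^ ((H.card : ℝ)) := by
            rw [Real.rpow_natCast]; push_cast; ring
    exact (Real.rpow_le_rpow_left_iff (by norm_num)).1 h1
  -- double counting
  have hsum : ∑ i : Fin m, (outputsOf f i).card = ∑ j : Fin n, (inputsOf f j).card := by
    unfold outputsOf inputsOf
    simp_rw [Finset.card_filter]
    exact Finset.sum_comm
  have hsum2 : (∑ j : Fin n, (inputsOf f j).card) ≤ n * d := by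
    calc (∑ j : Fin n, (inputsOf f j).card) ≤ ∑ _j : Fin n, d :=
          Finset.sum_le_sum (fun j _ => hloc j)
      _ = n * d := by simp [Finset.sum_const, mul_comm]
  have hHsum : (H.card : ℝ) * (β * n) ≤ ∑ i : Fin m, ((outputsOf f i).card : ℝ) := by
    calc (H.card : ℝ) * (β * n) = ∑ _i ∈ H, (β * n) := by
          rw [Finset.sum_const, nsmul_eq_mul]
      _ ≤ ∑ i ∈ H, ((outputsOf f i).card : ℝ) :=
          Finset.sum_le_sum (fun i hi => (Finset.mem_filter.1 hi).2)
      _ ≤ ∑ i : Fin m, ((outputsOf f i).card : ℝ) :=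
          Finset.sum_le_sum_of_subset_of_nonneg (Finset.subset_univ H)
            (fun i _ _ => by positivity)
  have hchain : α * n * (β * n) ≤ (n : ℝ) * d := by
    calc α * n * (β * n) ≤ (H.card : ℝ) * (β * n) := by
          apply mul_le_mul_of_nonneg_right hαn; positivity
      _ ≤ ∑ i : Fin m, ((outputsOf f i).card : ℝ) := hHsum
      _ = ((∑ i : Fin m, (outputsOf f i).card : ℕ) : ℝ) := by push_cast; ring
      _ ≤ (n : ℝ) * d := by rw [hsum]; exact_mod_cast hsum2
  rcases Nat.eq_zero_or_pos n with hn | hn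
  · subst hn; simp
  · have hnpos : (0:ℝ) < n := by exact_mod_cast hn
    rw [← mul_le_mul_iff_right₀ hnpos]
    calc (n:ℝ) * (α * β * n) = α * n * (β * n) := by ring
      _ ≤ (n:ℝ) * d := hchain
end

section
/- There exists a constant C > 0 such that for every odd n there exist m and a (C·(log n)²)-local function f : {0,1}^m → {0,1}^n whose image f({0,1}^m) is exactly the set {x ∈ {0,1}^n : |x| ≥ n/2} of inputs accepted by the majority function. -/
open Finset

namespace S12

/-! Generic helpers -/

lemma sum_testBit (L t : ℕ) (ht : t < 2 ^ L) :
    (∑ b ∈ Finset.range L, if t.testBit b then 2 ^ b else 0) = t := by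
  induction L generalizing t with
  | zero => simp at ht ⊢; omega
  | succ L ih =>
    rw [Finset.sum_range_succ']
    have h2 : t / 2 < 2 ^ L := by
      rw [pow_succ] at ht; omega
    have hrw : ∀ b, (if t.testBit (b+1) then 2 ^ (b+1) else 0)
        = 2 * (if (t/2).testBit b then 2 ^ b else 0) := by
      intro b
      rw [Nat.testBit_succ]
      split <;> ring
    calc (∑ b ∈ Finset.range L, if t.testBit (b+1) then 2 ^ (b+1) else 0)
          + (if t.testBit 0 then 2 ^ 0 else 0)
        = (∑ b ∈ Finset.range L, 2 * (if (t/2).testBit b then 2 ^ b else 0))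
          + (if t.testBit 0 then 2 ^ 0 else 0) := by
          rw [Finset.sum_congr rfl (fun b _ => hrw b)]
      _ = 2 * (t / 2) + (if t.testBit 0 then 1 else 0) := by
          rw [← Finset.mul_sum, ih _ h2]; norm_num
      _ = t := by
          rw [Nat.testBit_zero]
          rcases Nat.mod_two_eq_zero_or_one t with h | h <;> simp [h] <;> omega

lemma Ico_split {M : Type*} [AddCommMonoid M] (g : ℕ → M) (h j : ℕ) :
    ∑ i ∈ Finset.Ico (j * 2 ^ (h+1)) ((j+1) * 2 ^ (h+1)), g i
      = (∑ i ∈ Finset.Ico ((2*j) * 2 ^ h) ((2*j+1) * 2 ^ h), g i)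
        + ∑ i ∈ Finset.Ico ((2*j+1) * 2 ^ h) ((2*j+2) * 2 ^ h), g i := by
  rw [Finset.sum_Ico_consecutive]
  · congr 1 <;> ring
  · exact Nat.mul_le_mul_right _ (by omega)
  · exact Nat.mul_le_mul_right _ (by omega)

/-! The construction. `LL n` is the depth of the binary tree, `kk n = (n+1)/2`. -/

def LL (n : ℕ) : ℕ := Nat.clog 2 n
def kk (n : ℕ) : ℕ := (n+1)/2

lemma n_le_pow (n : ℕ) : n ≤ 2 ^ LL n := Nat.le_pow_clog (by norm_num) n

/-- capacity of node `(ℓ, j)`: number of live leaf positions below it. -/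
def cap (n ℓ j : ℕ) : ℕ :=
  ∑ i ∈ Finset.Ico (j * 2 ^ (LL n - ℓ)) ((j+1) * 2 ^ (LL n - ℓ)), if i < n then 1 else 0

/-- number of input bits. -/
def mm (n : ℕ) : ℕ := (LL n * 2 ^ (LL n) + 1) * LL n

/-- the value (in `[0, 2^(LL n))`) encoded by the block of input bits belonging to node `e`. -/
def av (n : ℕ) (y : Fin (mm n) → Bool) (e : ℕ) : ℕ :=
  ∑ b ∈ Finset.range (LL n),
    if h : e * LL n + b < mm n then (if y ⟨e * LL n + b, h⟩ then 2 ^ b else 0) else 0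

/-- weight given to the left child, when parent has weight `Wp` and children capacities
`cL`, `cR`, from randomness `a`. -/
def step (cL cR Wp a : ℕ) : ℕ := (Wp - cR) + a % (min cL Wp - (Wp - cR) + 1)

lemma step_ge (cL cR Wp a : ℕ) : Wp - cR ≤ step cL cR Wp a := Nat.le_add_right _ _

lemma step_le (cL cR Wp a : ℕ) (h : Wp ≤ cL + cR) : step cL cR Wp a ≤ min cL Wp := by
  have h1 : a % (min cL Wp - (Wp - cR) + 1) < min cL Wp - (Wp - cR) + 1 :=
    Nat.mod_lt _ (by omega)
  unfold step; omega

lemma step_exact (cL cR Wp t : ℕ) (h1 : Wp - cR ≤ t) (h2 : t ≤ min cL Wp) :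
    step cL cR Wp (t - (Wp - cR)) = t := by
  unfold step
  rw [Nat.mod_eq_of_lt (by omega)]
  omega

/-- the weight assigned to node `(ℓ, j)` of the tree, given input `y`. -/
def NW (n : ℕ) (y : Fin (mm n) → Bool) : ℕ → ℕ → ℕ
  | 0, _ => kk n + av n y (LL n * 2 ^ (LL n)) % (n - kk n + 1)
  | ℓ+1, j =>
      if j % 2 = 0
      then step (cap n (ℓ+1) (2*(j/2))) (cap n (ℓ+1) (2*(j/2)+1)) (NW n y ℓ (j/2))
             (av n y (ℓ * 2 ^ (LL n) + j/2))
      else NW n y ℓ (j/2) -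
           step (cap n (ℓ+1) (2*(j/2))) (cap n (ℓ+1) (2*(j/2)+1)) (NW n y ℓ (j/2))
             (av n y (ℓ * 2 ^ (LL n) + j/2))

/-- the local sampler. -/
def ff (n : ℕ) (y : Fin (mm n) → Bool) : Fin n → Bool :=
  fun i => decide (NW n y (LL n) i.val = 1)

lemma NW_succ (n : ℕ) (y : Fin (mm n) → Bool) (ℓ j : ℕ) :
    NW n y (ℓ+1) j =
      if j % 2 = 0
      then step (cap n (ℓ+1) (2*(j/2))) (cap n (ℓ+1) (2*(j/2)+1)) (NW n y ℓ (j/2))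
             (av n y (ℓ * 2 ^ (LL n) + j/2))
      else NW n y ℓ (j/2) -
           step (cap n (ℓ+1) (2*(j/2))) (cap n (ℓ+1) (2*(j/2)+1)) (NW n y ℓ (j/2))
             (av n y (ℓ * 2 ^ (LL n) + j/2)) := rfl

/-! capacity lemmas -/

lemma cap_split (n ℓ j : ℕ) (h : ℓ < LL n) :
    cap n ℓ j = cap n (ℓ+1) (2*j) + cap n (ℓ+1) (2*j+1) := by
  unfold cap
  have e : LL n - ℓ = (LL n - (ℓ+1)) + 1 := by omega
  rw [e]
  have e2 : (2*j+2) = (2*j+1)+1 := by ring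
  rw [← e2]
  exact Ico_split _ _ _

lemma cap_leaf (n i : ℕ) : cap n (LL n) i = if i < n then 1 else 0 := by
  unfold cap
  rw [Nat.sub_self, pow_zero, mul_one, mul_one]
  rw [Finset.sum_Ico_succ_top (by omega), Finset.Ico_self, Finset.sum_empty, zero_add]

lemma cap_root (n : ℕ) : cap n 0 0 = n := by
  unfold cap
  simp only [Nat.sub_zero, zero_mul, zero_add, one_mul]
  have h1 : Finset.Ico 0 (2 ^ LL n) = Finset.range (2 ^ LL n) := by
    rw [Finset.range_eq_Ico]
  rw [h1]
  rw [← Finset.sum_subset (Finset.range_subset_range.2 (n_le_pow n))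
    (fun x _ hx => by rw [if_neg]; simpa using hx)]
  rw [Finset.sum_congr rfl (fun x hx => if_pos (Finset.mem_range.1 hx)), Finset.sum_const,
    Finset.card_range, smul_eq_mul, mul_one]

lemma cap_le_size (n ℓ j : ℕ) : cap n ℓ j ≤ 2 ^ (LL n - ℓ) := by
  unfold cap
  calc (∑ i ∈ Finset.Ico (j * 2 ^ (LL n - ℓ)) ((j+1) * 2 ^ (LL n - ℓ)),
          if i < n then 1 else 0)
      ≤ ∑ _i ∈ Finset.Ico (j * 2 ^ (LL n - ℓ)) ((j+1) * 2 ^ (LL n - ℓ)), 1 :=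
        Finset.sum_le_sum (fun i _ => by split <;> omega)
    _ = 2 ^ (LL n - ℓ) := by
        rw [Finset.sum_const, Nat.card_Ico, smul_eq_mul, mul_one, add_mul, one_mul]
        generalize 2 ^ (LL n - ℓ) = h
        omega

/-! weight invariants -/

lemma NW_le_cap (n : ℕ) (hn : 0 < n) (y : Fin (mm n) → Bool) :
    ∀ ℓ, ℓ ≤ LL n → ∀ j, j < 2 ^ ℓ → NW n y ℓ j ≤ cap n ℓ j := by
  intro ℓ
  induction ℓ with
  | zero =>
    intro _ j hj
    interval_cases j
    rw [cap_root]
    show kk n + av n y (LL n * 2 ^ (LL n)) % (n - kk n + 1) ≤ n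
    have h1 : av n y (LL n * 2 ^ (LL n)) % (n - kk n + 1) < n - kk n + 1 :=
      Nat.mod_lt _ (by omega)
    unfold kk at *; omega
  | succ ℓ ih =>
    intro hℓ j hj
    have hj2 : j / 2 < 2 ^ ℓ := by
      rw [pow_succ] at hj; omega
    have hWp : NW n y ℓ (j/2) ≤ cap n ℓ (j/2) := ih (by omega) _ hj2
    have hcs : cap n ℓ (j/2) = cap n (ℓ+1) (2*(j/2)) + cap n (ℓ+1) (2*(j/2)+1) :=
      cap_split n ℓ (j/2) (by omega)
    have hle : step (cap n (ℓ+1) (2*(j/2))) (cap n (ℓ+1) (2*(j/2)+1)) (NW n y ℓ (j/2))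
        (av n y (ℓ * 2 ^ (LL n) + j/2)) ≤ min (cap n (ℓ+1) (2*(j/2))) (NW n y ℓ (j/2)) :=
      step_le _ _ _ _ (by omega)
    have hge : NW n y ℓ (j/2) - cap n (ℓ+1) (2*(j/2)+1)
        ≤ step (cap n (ℓ+1) (2*(j/2))) (cap n (ℓ+1) (2*(j/2)+1)) (NW n y ℓ (j/2))
          (av n y (ℓ * 2 ^ (LL n) + j/2)) := step_ge _ _ _ _
    rw [NW_succ]
    rcases Nat.mod_two_eq_zero_or_one j with h | h
    · rw [if_pos h]
      have hj0 : j = 2*(j/2) := by omega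
      conv_rhs => rw [hj0]
      omega
    · rw [if_neg (by omega)]
      have hj0 : j = 2*(j/2)+1 := by omega
      conv_rhs => rw [hj0]
      omega

lemma NW_split (n : ℕ) (hn : 0 < n) (y : Fin (mm n) → Bool) (ℓ j : ℕ)
    (hℓ : ℓ < LL n) (hj : j < 2 ^ ℓ) :
    NW n y (ℓ+1) (2*j) + NW n y (ℓ+1) (2*j+1) = NW n y ℓ j := by
  have h0 : (2*j) % 2 = 0 := by omega
  have h1 : (2*j+1) % 2 = 1 := by omega
  have hd0 : (2*j) / 2 = j := by omega
  have hd1 : (2*j+1) / 2 = j := by omega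
  have hWp : NW n y ℓ j ≤ cap n ℓ j := NW_le_cap n hn y ℓ (by omega) j hj
  have hcs : cap n ℓ j = cap n (ℓ+1) (2*j) + cap n (ℓ+1) (2*j+1) := cap_split n ℓ j hℓ
  have hle : step (cap n (ℓ+1) (2*j)) (cap n (ℓ+1) (2*j+1)) (NW n y ℓ j)
      (av n y (ℓ * 2 ^ (LL n) + j)) ≤ min (cap n (ℓ+1) (2*j)) (NW n y ℓ j) :=
    step_le _ _ _ _ (by omega)
  rw [NW_succ, NW_succ, if_pos h0, if_neg (by omega), hd0, hd1]
  omega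

lemma sum_leaves (n : ℕ) (hn : 0 < n) (y : Fin (mm n) → Bool) :
    ∀ d ℓ, ℓ + d = LL n → ∀ j, j < 2 ^ ℓ →
      (∑ i ∈ Finset.Ico (j * 2 ^ d) ((j+1) * 2 ^ d), NW n y (LL n) i) = NW n y ℓ j := by
  intro d
  induction d with
  | zero =>
    intro ℓ hℓ j hj
    have hL : ℓ = LL n := by omega
    subst hL
    simp only [pow_zero, mul_one]
    rw [Finset.sum_Ico_succ_top (by omega), Finset.Ico_self, Finset.sum_empty, zero_add]
  | succ d ih =>
    intro ℓ hℓ j hj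
    have e2 : (2*j+2) = (2*j+1)+1 := by ring
    rw [Ico_split, e2, ih (ℓ+1) (by omega) (2*j) (by rw [pow_succ]; omega),
      ih (ℓ+1) (by omega) (2*j+1) (by rw [pow_succ]; omega)]
    exact NW_split n hn y ℓ j (by omega) hj

lemma NW_leaf_le_one (n : ℕ) (hn : 0 < n) (y : Fin (mm n) → Bool) (i : ℕ)
    (hi : i < 2 ^ LL n) : NW n y (LL n) i ≤ if i < n then 1 else 0 := by
  have := NW_le_cap n hn y (LL n) le_rfl i hi
  rwa [cap_leaf] at this

lemma wt_ff (n : ℕ) (hn : 0 < n) (y : Fin (mm n) → Bool) : wt (ff n y) = NW n y 0 0 := by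
  have hsum : (∑ i ∈ Finset.Ico (0 * 2 ^ (LL n)) ((0+1) * 2 ^ (LL n)), NW n y (LL n) i)
      = NW n y 0 0 := sum_leaves n hn y (LL n) 0 (by omega) 0 (by norm_num)
  rw [zero_mul, zero_add, one_mul, ← Finset.range_eq_Ico] at hsum
  have h2 : (∑ i ∈ Finset.range (2 ^ LL n), NW n y (LL n) i)
      = ∑ i ∈ Finset.range n, NW n y (LL n) i := by
    symm
    apply Finset.sum_subset (Finset.range_subset_range.2 (n_le_pow n))
    intro x hx hnx
    have := NW_leaf_le_one n hn y x (Finset.mem_range.1 hx)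
    rw [if_neg (by simpa using hnx)] at this
    omega
  rw [h2] at hsum
  unfold wt ff
  rw [Finset.card_filter]
  rw [← Fin.sum_univ_eq_sum_range (fun i => NW n y (LL n) i) n] at hsum
  rw [← hsum]
  apply Finset.sum_congr rfl
  intro i _
  have h1 := NW_leaf_le_one n hn y i.val (lt_of_lt_of_le i.isLt (n_le_pow n))
  rw [if_pos i.isLt] at h1
  by_cases h : NW n y (LL n) i.val = 1
  · simp [h]
  · have : NW n y (LL n) i.val = 0 := by omega
    simp [h, this]

lemma NW_zero (n : ℕ) (y : Fin (mm n) → Bool) (j : ℕ) :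
    NW n y 0 j = kk n + av n y (LL n * 2 ^ (LL n)) % (n - kk n + 1) := rfl

lemma divmod_idx (L e b : ℕ) (hb : b < L) :
    (e * L + b) / L = e ∧ (e * L + b) % L = b := by
  have hL : 0 < L := by omega
  constructor
  · rw [mul_comm, Nat.mul_add_div hL, Nat.div_eq_of_lt hb, add_zero]
  · rw [mul_comm, Nat.mul_add_mod, Nat.mod_eq_of_lt hb]

/-! surjectivity -/

def xe (n : ℕ) (x : Fin n → Bool) : ℕ → ℕ :=
  fun i => if h : i < n then (if x ⟨i, h⟩ then 1 else 0) else 0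

def sw (n : ℕ) (x : Fin n → Bool) (ℓ j : ℕ) : ℕ :=
  ∑ i ∈ Finset.Ico (j * 2 ^ (LL n - ℓ)) ((j+1) * 2 ^ (LL n - ℓ)), xe n x i

lemma sw_le_cap (n : ℕ) (x : Fin n → Bool) (ℓ j : ℕ) : sw n x ℓ j ≤ cap n ℓ j := by
  apply Finset.sum_le_sum
  intro i _
  unfold xe
  by_cases h : i < n
  · rw [dif_pos h, if_pos h]; split <;> omega
  · rw [dif_neg h, if_neg h]

lemma sw_split (n : ℕ) (x : Fin n → Bool) (ℓ j : ℕ) (h : ℓ < LL n) :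
    sw n x ℓ j = sw n x (ℓ+1) (2*j) + sw n x (ℓ+1) (2*j+1) := by
  unfold sw
  have e : LL n - ℓ = (LL n - (ℓ+1)) + 1 := by omega
  rw [e]
  have e2 : (2*j+2) = (2*j+1)+1 := by ring
  rw [← e2]
  exact Ico_split _ _ _

lemma sw_leaf (n : ℕ) (x : Fin n → Bool) (i : ℕ) : sw n x (LL n) i = xe n x i := by
  unfold sw
  rw [Nat.sub_self, pow_zero, mul_one, mul_one]
  rw [Finset.sum_Ico_succ_top (by omega), Finset.Ico_self, Finset.sum_empty, zero_add]

lemma wt_le (n : ℕ) (x : Fin n → Bool) : wt x ≤ n :=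
  le_trans (Finset.card_filter_le _ _) (by simp)

lemma sw_root (n : ℕ) (x : Fin n → Bool) : sw n x 0 0 = wt x := by
  unfold sw
  simp only [Nat.sub_zero, zero_mul, zero_add, one_mul]
  rw [← Finset.range_eq_Ico]
  rw [← Finset.sum_subset (Finset.range_subset_range.2 (n_le_pow n))
    (fun i _ hi => by unfold xe; rw [dif_neg (by simpa using hi)])]
  rw [← Fin.sum_univ_eq_sum_range (fun i => xe n x i) n]
  unfold wt
  rw [Finset.card_filter]
  apply Finset.sum_congr rfl
  intro i _
  simp [xe]

def tgt (n : ℕ) (x : Fin n → Bool) (e : ℕ) : ℕ :=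
  if e = LL n * 2 ^ (LL n) then wt x - kk n
  else sw n x (e / 2 ^ (LL n) + 1) (2 * (e % 2 ^ (LL n)))
       - (sw n x (e / 2 ^ (LL n)) (e % 2 ^ (LL n))
          - cap n (e / 2 ^ (LL n) + 1) (2 * (e % 2 ^ (LL n)) + 1))

def ybits (n : ℕ) (x : Fin n → Bool) : Fin (mm n) → Bool :=
  fun idx => (tgt n x (idx.val / LL n)).testBit (idx.val % LL n)

lemma av_ybits (n : ℕ) (x : Fin n → Bool) (e : ℕ) (he : e ≤ LL n * 2 ^ (LL n))
    (h : tgt n x e < 2 ^ (LL n)) : av n (ybits n x) e = tgt n x e := by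
  rcases Nat.eq_zero_or_pos (LL n) with hL | hL
  · unfold av
    rw [hL, pow_zero] at h
    rw [hL]
    simp only [Finset.range_zero, Finset.sum_empty]
    omega
  · unfold av
    rw [← sum_testBit (LL n) (tgt n x e) h]
    apply Finset.sum_congr rfl
    intro b hb
    have hb' : b < LL n := Finset.mem_range.1 hb
    have hlt : e * LL n + b < mm n := by
      have h1 : e * LL n ≤ (LL n * 2 ^ (LL n)) * LL n := Nat.mul_le_mul_right _ he
      unfold mm
      have h2 : (LL n * 2 ^ (LL n) + 1) * LL n = LL n * 2 ^ (LL n) * LL n + LL n := by ring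
      omega
    rw [dif_pos hlt]
    unfold ybits
    simp only
    rw [(divmod_idx (LL n) e b hb').1, (divmod_idx (LL n) e b hb').2]

lemma NW_ybits (n : ℕ) (hn : 0 < n) (x : Fin n → Bool) (hx : kk n ≤ wt x) :
    ∀ ℓ, ℓ ≤ LL n → ∀ j, j < 2 ^ ℓ → NW n (ybits n x) ℓ j = sw n x ℓ j := by
  intro ℓ
  induction ℓ with
  | zero =>
    intro _ j hj
    interval_cases j
    rw [NW_zero]
    have hwle : wt x ≤ n := wt_le n x
    have hkk : 1 ≤ kk n := by unfold kk; omega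
    have hkn : kk n ≤ n := by unfold kk; omega
    have htgt : tgt n x (LL n * 2 ^ (LL n)) = wt x - kk n := if_pos rfl
    have hlt : tgt n x (LL n * 2 ^ (LL n)) < 2 ^ (LL n) := by
      rw [htgt]
      have := n_le_pow n
      omega
    rw [av_ybits n x _ le_rfl hlt, htgt, Nat.mod_eq_of_lt (by omega), sw_root]
    omega
  | succ ℓ ih =>
    intro hℓ j hj
    have hj2 : j / 2 < 2 ^ ℓ := by rw [pow_succ] at hj; omega
    have hIH : NW n (ybits n x) ℓ (j/2) = sw n x ℓ (j/2) := ih (by omega) _ hj2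
    set j' := j / 2 with hj'
    have hsplit : sw n x ℓ j' = sw n x (ℓ+1) (2*j') + sw n x (ℓ+1) (2*j'+1) :=
      sw_split n x ℓ j' (by omega)
    have hsL : sw n x (ℓ+1) (2*j') ≤ cap n (ℓ+1) (2*j') := sw_le_cap n x _ _
    have hsR : sw n x (ℓ+1) (2*j'+1) ≤ cap n (ℓ+1) (2*j'+1) := sw_le_cap n x _ _
    have hp : (2:ℕ)^ℓ ≤ 2 ^ (LL n) := Nat.pow_le_pow_right (by norm_num) (by omega)
    have he1 : ℓ * 2 ^ (LL n) + j' < LL n * 2 ^ (LL n) := by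
      have e : (ℓ+1) * 2 ^ (LL n) = ℓ * 2 ^ (LL n) + 2 ^ (LL n) := by ring
      have h2 : (ℓ+1) * 2 ^ (LL n) ≤ LL n * 2 ^ (LL n) := Nat.mul_le_mul_right _ (by omega)
      omega
    have hediv := (divmod_idx (2 ^ (LL n)) ℓ j' (by omega)).1
    have hemod := (divmod_idx (2 ^ (LL n)) ℓ j' (by omega)).2
    have htgt : tgt n x (ℓ * 2 ^ (LL n) + j')
        = sw n x (ℓ+1) (2*j') - (sw n x ℓ j' - cap n (ℓ+1) (2*j'+1)) := by
      unfold tgt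
      rw [if_neg (by omega), hediv, hemod]
    have hcapb : cap n (ℓ+1) (2*j') < 2 ^ (LL n) :=
      lt_of_le_of_lt (cap_le_size n (ℓ+1) (2*j'))
        (Nat.pow_lt_pow_right (by norm_num) (by omega))
    have htlt : tgt n x (ℓ * 2 ^ (LL n) + j') < 2 ^ (LL n) := by rw [htgt]; omega
    have hav : av n (ybits n x) (ℓ * 2 ^ (LL n) + j')
        = sw n x (ℓ+1) (2*j') - (sw n x ℓ j' - cap n (ℓ+1) (2*j'+1)) := by
      rw [av_ybits n x _ (le_of_lt he1) htlt, htgt]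
    have hstep : step (cap n (ℓ+1) (2*j')) (cap n (ℓ+1) (2*j'+1)) (NW n (ybits n x) ℓ j')
        (av n (ybits n x) (ℓ * 2 ^ (LL n) + j')) = sw n x (ℓ+1) (2*j') := by
      rw [hIH, hav]
      exact step_exact _ _ _ _ (by omega) (by omega)
    rw [NW_succ]
    rcases Nat.mod_two_eq_zero_or_one j with h | h
    · rw [if_pos h, hstep]
      have hjj : j = 2*j' := by omega
      rw [hjj]
    · rw [if_neg (by omega), hstep, hIH]
      have hjj : j = 2*j'+1 := by omega
      rw [hjj]
      omega

lemma ff_surj (n : ℕ) (hn : 0 < n) (x : Fin n → Bool) (hx : kk n ≤ wt x) :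
    ff n (ybits n x) = x := by
  funext i
  unfold ff
  have h := NW_ybits n hn x hx (LL n) le_rfl i.val (lt_of_lt_of_le i.isLt (n_le_pow n))
  rw [h, sw_leaf]
  unfold xe
  rw [dif_pos i.isLt]
  cases hxi : x ⟨i.val, i.isLt⟩ <;> simp_all [Fin.eta]

/-! locality -/

lemma inputs_subset {m n : ℕ} (f : (Fin m → Bool) → (Fin n → Bool)) (S : Finset (Fin m))
    (j : Fin n) (h : ∀ y y', (∀ i ∈ S, y i = y' i) → f y j = f y' j) :
    inputsOf f j ⊆ S := by
  intro i hi
  by_contra hiS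
  rw [inputsOf, Finset.mem_filter] at hi
  obtain ⟨z, hz⟩ := hi.2
  apply hz
  apply h
  intro i' hi'
  exact (Function.update_of_ne (by rintro rfl; exact hiS hi') _ _).symm

def nodesOf (n i : ℕ) : Finset ℕ :=
  insert (LL n * 2 ^ (LL n))
    ((Finset.range (LL n)).image (fun ℓ => ℓ * 2 ^ (LL n) + i / 2 ^ (LL n - ℓ)))

def Sb (n i : ℕ) : Finset (Fin (mm n)) :=
  Finset.univ.filter (fun idx => idx.val / LL n ∈ nodesOf n i)

lemma card_Sb (n i : ℕ) : (Sb n i).card ≤ (LL n + 1) * LL n := by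
  rcases Nat.eq_zero_or_pos (LL n) with hL | hL
  · have hmm : mm n = 0 := by unfold mm; rw [hL]; ring
    have hc : (Sb n i).card ≤ (Finset.univ : Finset (Fin (mm n))).card :=
      Finset.card_filter_le _ _
    rw [Finset.card_univ, Fintype.card_fin] at hc
    omega
  · have hinj : (Sb n i).card ≤ ((nodesOf n i) ×ˢ Finset.range (LL n)).card := by
      apply Finset.card_le_card_of_injOn (fun idx => (idx.val / LL n, idx.val % LL n))
      · intro idx hidx
        rw [Finset.mem_coe, Finset.mem_product]
        exact ⟨(Finset.mem_filter.1 hidx).2, Finset.mem_range.2 (Nat.mod_lt _ hL)⟩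
      · intro a _ b _ hab
        have h1 : a.val / LL n = b.val / LL n := congrArg Prod.fst hab
        have h2 : a.val % LL n = b.val % LL n := congrArg Prod.snd hab
        have h3 : a.val = b.val := by
          have ha := Nat.div_add_mod a.val (LL n)
          have hb := Nat.div_add_mod b.val (LL n)
          have : LL n * (a.val / LL n) = LL n * (b.val / LL n) := by rw [h1]
          omega
        exact Fin.ext h3
    have hcard : ((nodesOf n i) ×ˢ Finset.range (LL n)).card ≤ (LL n + 1) * LL n := by
      rw [Finset.card_product, Finset.card_range]
      apply Nat.mul_le_mul_right
      calc (nodesOf n i).card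
          ≤ ((Finset.range (LL n)).image
              (fun ℓ => ℓ * 2 ^ (LL n) + i / 2 ^ (LL n - ℓ))).card + 1 :=
            Finset.card_insert_le _ _
        _ ≤ LL n + 1 := by
            have := Finset.card_image_le (s := Finset.range (LL n))
              (f := fun ℓ => ℓ * 2 ^ (LL n) + i / 2 ^ (LL n - ℓ))
            rw [Finset.card_range] at this
            omega
    omega

lemma av_agree (n : ℕ) (y y' : Fin (mm n) → Bool) (i e : ℕ) (he : e ∈ nodesOf n i)
    (hagree : ∀ idx ∈ Sb n i, y idx = y' idx) : av n y e = av n y' e := by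
  unfold av
  apply Finset.sum_congr rfl
  intro b hb
  have hb' : b < LL n := Finset.mem_range.1 hb
  split
  case isTrue hcond =>
    have hyy : y ⟨e * LL n + b, hcond⟩ = y' ⟨e * LL n + b, hcond⟩ := by
      apply hagree
      rw [Sb, Finset.mem_filter]
      refine ⟨Finset.mem_univ _, ?_⟩
      show (e * LL n + b) / LL n ∈ nodesOf n i
      rw [(divmod_idx (LL n) e b hb').1]
      exact he
    rw [hyy]
  case isFalse => rfl

lemma NW_agree (n : ℕ) (y y' : Fin (mm n) → Bool) (i : ℕ)
    (hagree : ∀ idx ∈ Sb n i, y idx = y' idx) :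
    ∀ ℓ, ℓ ≤ LL n → NW n y ℓ (i / 2 ^ (LL n - ℓ)) = NW n y' ℓ (i / 2 ^ (LL n - ℓ)) := by
  intro ℓ
  induction ℓ with
  | zero =>
    intro _
    rw [NW_zero, NW_zero, av_agree n y y' i _ (Finset.mem_insert_self _ _) hagree]
  | succ ℓ ih =>
    intro hℓ
    have hdd : i / 2 ^ (LL n - (ℓ+1)) / 2 = i / 2 ^ (LL n - ℓ) := by
      rw [Nat.div_div_eq_div_mul, ← pow_succ]
      have hee : LL n - (ℓ+1) + 1 = LL n - ℓ := by omega
      rw [hee]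
    have he : ℓ * 2 ^ (LL n) + i / 2 ^ (LL n - ℓ) ∈ nodesOf n i := by
      apply Finset.mem_insert_of_mem
      exact Finset.mem_image.2 ⟨ℓ, Finset.mem_range.2 (by omega), rfl⟩
    rw [NW_succ, NW_succ, hdd, ih (by omega), av_agree n y y' i _ he hagree]

lemma ff_local (n : ℕ) : IsLocal (ff n) ((LL n + 1) * LL n) := by
  intro j
  have hsub : inputsOf (ff n) j ⊆ Sb n j.val := by
    apply inputs_subset
    intro y y' hagree
    unfold ff
    have h := NW_agree n y y' j.val hagree (LL n) le_rfl
    rw [Nat.sub_self, pow_zero, Nat.div_one] at h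
    rw [h]
  exact le_trans (Finset.card_le_card hsub) (card_Sb n j.val)

lemma kk_le_wt (n : ℕ) (hodd : Odd n) (x : Fin n → Bool) (hx : (n : ℝ) / 2 ≤ (wt x : ℝ)) :
    kk n ≤ wt x := by
  have h2 : (n:ℝ) ≤ 2 * (wt x : ℝ) := by linarith
  have h3 : n ≤ 2 * wt x := by exact_mod_cast h2
  have h4 := Nat.odd_iff.1 hodd
  unfold kk
  omega

end S12

/-- There is a constant `C > 0` such that for every odd `n` there are `m`
and a `(C (log n)²)`-local function `f : {0,1}^m → {0,1}^n` whose image is exactly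
`Maj⁻¹(1) = {x : |x| ≥ n/2}`. -/


theorem stmt12 :
    ∃ C : ℝ, 0 < C ∧ ∀ n : ℕ, Odd n →
      ∃ (m d : ℕ) (f : (Fin m → Bool) → (Fin n → Bool)),
        (d : ℝ) ≤ C * (Real.log n) ^ 2 ∧ IsLocal f d ∧
        ∀ x : Fin n → Bool, (∃ y, f y = x) ↔ (n : ℝ) / 2 ≤ (wt x : ℝ) := by
  refine ⟨100, by norm_num, ?_⟩
  intro n hodd
  have hn : 0 < n := hodd.pos
  refine ⟨S12.mm n, (S12.LL n + 1) * S12.LL n, S12.ff n, ?_, S12.ff_local n, ?_⟩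
  · by_cases h1 : n = 1
    · subst h1
      have hL : S12.LL 1 = 0 := by unfold S12.LL; exact Nat.clog_one_right 2
      rw [hL]
      simp [Real.log_one]
    · have h3 : 3 ≤ n := by
        have := Nat.odd_iff.1 hodd
        omega
      have hL : S12.LL n ≤ Nat.log 2 n + 1 :=
        (Nat.clog_le_iff_le_pow (by norm_num)).2
          (le_of_lt (Nat.lt_pow_succ_log_self (by norm_num) n))
      have hlog : (Nat.log 2 n : ℝ) ≤ 2 * Real.log n := by
        have h2 : (2:ℝ) ^ (Nat.log 2 n) ≤ (n : ℝ) := by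
          exact_mod_cast Nat.pow_log_le_self 2 (by omega)
        have h5 : Real.log ((2:ℝ) ^ (Nat.log 2 n)) ≤ Real.log n :=
          Real.log_le_log (pow_pos (by norm_num) _) h2
        rw [Real.log_pow] at h5
        push_cast at h5
        have hl2 : (1/2 : ℝ) ≤ Real.log 2 := by
          have := Real.log_two_gt_d9
          linarith
        nlinarith [(Nat.cast_nonneg (Nat.log 2 n) : (0:ℝ) ≤ (Nat.log 2 n : ℝ))]
      have hln1 : 1 ≤ Real.log n := by
        have he3 : Real.exp 1 < 3 := lt_of_lt_of_le Real.exp_one_lt_d9 (by norm_num)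
        have h3' : (3:ℝ) ≤ (n:ℝ) := by exact_mod_cast h3
        rw [show (1:ℝ) = Real.log (Real.exp 1) from (Real.log_exp 1).symm]
        exact Real.log_le_log (Real.exp_pos 1) (by linarith)
      have hLr : (S12.LL n : ℝ) ≤ (Nat.log 2 n : ℝ) + 1 := by exact_mod_cast hL
      have hLnn : (0:ℝ) ≤ (S12.LL n : ℝ) := Nat.cast_nonneg _
      have hcast : (((S12.LL n + 1) * S12.LL n : ℕ) : ℝ)
          = ((S12.LL n : ℝ) + 1) * (S12.LL n : ℝ) := by push_cast; ring
      rw [hcast]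
      nlinarith [(Nat.cast_nonneg (Nat.log 2 n) : (0:ℝ) ≤ (Nat.log 2 n : ℝ))]
  · intro x
    constructor
    · rintro ⟨y, rfl⟩
      have h1 : S12.kk n ≤ wt (S12.ff n y) := by
        rw [S12.wt_ff n hn y, S12.NW_zero]
        exact Nat.le_add_right _ _
      have h2 : n ≤ 2 * S12.kk n := by unfold S12.kk; omega
      have h3 : (n:ℝ) ≤ 2 * (wt (S12.ff n y) : ℝ) := by exact_mod_cast le_trans h2 (by omega)
      linarith
    · intro hx
      exact ⟨S12.ybits n x, S12.ff_surj n hn x (S12.kk_le_wt n hodd x hx)⟩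
end

section
/- Let n be odd, let f : {0,1}^m → {0,1}^n be a d-local function with f({0,1}^m) = {x ∈ {0,1}^n : |x| ≥ n/2}, let k ≥ 1, and let I ⊆ [m] be the set of all k-influential input bits of f. Then for every set S of output bits of size at most n/(4kd) there exists an assignment ρ ∈ {0,1}^I such that: (i) ρ fixes every bit of S to 1, i.e., f(x)_j = 1 for every j ∈ S and every x ∈ {0,1}^m agreeing with ρ on I; and (ii) the number of output bits j ∈ [n] such that f(x)_j = 1 for every x agreeing with ρ on I is at most (n+1)/2. -/
open Finset

/-- An assignment `ρ` to the input bits in `I` fixes output bit `j` to `1`: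
every input agreeing with `ρ` on `I` makes the `j`-th output `1`. -/
def FixesToOne {m n : ℕ} (f : (Fin m → Bool) → (Fin n → Bool)) (I : Finset (Fin m))
    (ρ : Fin m → Bool) (j : Fin n) : Prop :=
  ∀ x : Fin m → Bool, (∀ i ∈ I, x i = ρ i) → f x j = true

instance {m n : ℕ} (f : (Fin m → Bool) → (Fin n → Bool)) (I : Finset (Fin m))
    (ρ : Fin m → Bool) (j : Fin n) : Decidable (FixesToOne f I ρ j) := by
  unfold FixesToOne; infer_instance


lemma eval_congr_aux {m n : ℕ} (f : (Fin m → Bool) → (Fin n → Bool)) (j : Fin n) :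
    ∀ (N : ℕ) (x₁ x₂ : Fin m → Bool),
      (Finset.univ.filter fun i => x₁ i ≠ x₂ i).card ≤ N →
      (∀ i ∈ inputsOf f j, x₁ i = x₂ i) → f x₁ j = f x₂ j := by
  intro N
  induction N with
  | zero =>
    intro x₁ x₂ hcard _
    have : x₁ = x₂ := by
      funext i
      by_contra hne
      have : i ∈ Finset.univ.filter fun i => x₁ i ≠ x₂ i := by simp [hne]
      have := Finset.card_pos.mpr ⟨i, this⟩
      omega
    rw [this]
  | succ N ih =>
    intro x₁ x₂ hcard hagree
    by_cases hD : (Finset.univ.filter fun i => x₁ i ≠ x₂ i) = ∅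
    · have : x₁ = x₂ := by
        funext i
        by_contra hne
        have : i ∈ Finset.univ.filter fun i => x₁ i ≠ x₂ i := by simp [hne]
        simp [hD] at this
      rw [this]
    · obtain ⟨i, hi⟩ := Finset.nonempty_iff_ne_empty.mpr hD
      simp only [Finset.mem_filter, Finset.mem_univ, true_and] at hi
      have hiI : i ∉ inputsOf f j := fun h => hi (hagree i h)
      have hna : ¬ Affects f i j := by
        simpa [inputsOf] using hiI
      have hflip : x₂ i = !(x₁ i) := by
        cases h1 : x₁ i <;> cases h2 : x₂ i <;> simp_all
      set x₁' := Function.update x₁ i (x₂ i) with hx₁'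
      have h1 : f x₁ j = f x₁' j := by
        by_contra hne
        exact hna ⟨x₁, by rw [← hflip]; exact hne⟩
      rw [h1]
      apply ih
      · have hsub : (Finset.univ.filter fun i' => x₁' i' ≠ x₂ i') ⊆
            (Finset.univ.filter fun i' => x₁ i' ≠ x₂ i').erase i := by
          intro i' hi'
          simp only [Finset.mem_filter, Finset.mem_univ, true_and] at hi'
          have hne : i' ≠ i := by
            intro h; subst h; simp [hx₁', Function.update_self] at hi'
          refine Finset.mem_erase.mpr ⟨hne, ?_⟩
          simp only [Finset.mem_filter, Finset.mem_univ, true_and]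
          rwa [hx₁', Function.update_of_ne hne] at hi'
        have h2 := Finset.card_le_card hsub
        rw [Finset.card_erase_of_mem (by simp [hi])] at h2
        omega
      · intro i' hi'
        have hne : i' ≠ i := fun h => hiI (h ▸ hi')
        rw [hx₁', Function.update_of_ne hne]
        exact hagree i' hi'

lemma eval_congr {m n : ℕ} (f : (Fin m → Bool) → (Fin n → Bool)) (j : Fin n)
    (x₁ x₂ : Fin m → Bool) (h : ∀ i ∈ inputsOf f j, x₁ i = x₂ i) : f x₁ j = f x₂ j :=
  eval_congr_aux f j _ x₁ x₂ le_rfl h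

/-- Let `n` be odd, `f` a `d`-local function with image exactly
`Maj⁻¹(1)`, `k ≥ 1`, and `I` the set of all `k`-influential input bits. Then for every set
`S` of output bits with `|S| ≤ n/(4kd)` there is an assignment `ρ` to `I` fixing every bit
of `S` to `1` and fixing at most `(n+1)/2` output bits to `1` in total. -/
theorem stmt15 (n m d k : ℕ) (hn : Odd n) (hk : 1 ≤ k)
    (f : (Fin m → Bool) → (Fin n → Bool)) (hloc : IsLocal f d)
    (himg : ∀ x : Fin n → Bool, (∃ y, f y = x) ↔ (n : ℝ) / 2 ≤ (wt x : ℝ))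
    (I : Finset (Fin m)) (hI : I = Finset.univ.filter fun i => k ≤ (outputsOf f i).card)
    (S : Finset (Fin n)) (hS : (S.card : ℝ) ≤ (n : ℝ) / (4 * (k : ℝ) * (d : ℝ))) :
    ∃ ρ : Fin m → Bool,
      (∀ j ∈ S, FixesToOne f I ρ j) ∧
      ((Finset.univ.filter fun j : Fin n => FixesToOne f I ρ j).card : ℝ) ≤
        ((n : ℝ) + 1) / 2 := by
  obtain ⟨c, hc⟩ : ∃ c, n = 2 * c + 1 := hn
  -- the half value
  have hhalf : (n + 1) / 2 = c + 1 := by omega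
  classical
  set T := (S.biUnion fun j => inputsOf f j) \ I with hT
  set O := T.biUnion fun i => outputsOf f i with hO
  set A := S ∪ O with hA
  -- cardinality bounds
  have hTcard : T.card ≤ d * S.card := by
    calc T.card ≤ (S.biUnion fun j => inputsOf f j).card := Finset.card_le_card Finset.sdiff_subset
      _ ≤ ∑ j ∈ S, (inputsOf f j).card := Finset.card_biUnion_le
      _ ≤ ∑ _j ∈ S, d := Finset.sum_le_sum fun j _ => hloc j
      _ = d * S.card := by rw [Finset.sum_const, smul_eq_mul, mul_comm]
  have hOcard : O.card ≤ (k - 1) * T.card := by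
    calc O.card ≤ ∑ i ∈ T, (outputsOf f i).card := Finset.card_biUnion_le
      _ ≤ ∑ _i ∈ T, (k - 1) := by
          apply Finset.sum_le_sum
          intro i hi
          have hiI : i ∉ I := (Finset.mem_sdiff.mp hi).2
          rw [hI] at hiI
          simp only [Finset.mem_filter, Finset.mem_univ, true_and, not_le] at hiI
          omega
      _ = (k - 1) * T.card := by rw [Finset.sum_const, smul_eq_mul, mul_comm]
  have hAcard : A.card ≤ c + 1 := by
    rcases Finset.eq_empty_or_nonempty S with hSe | hSne
    · have hTe : T = ∅ := by rw [hT, hSe]; simp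
      have : A = ∅ := by rw [hA, hO, hTe, hSe]; simp
      simp [this]
    · have hS1 : (1 : ℕ) ≤ S.card := Finset.card_pos.mpr hSne
      have hd : 1 ≤ d := by
        by_contra hd0
        have hd0' : d = 0 := by omega
        have hz : (4 * (k : ℝ) * (d : ℝ)) = 0 := by rw [hd0']; push_cast; ring
        rw [hz, div_zero] at hS
        have : (1 : ℝ) ≤ (S.card : ℝ) := by exact_mod_cast hS1
        linarith
      have hAle : A.card ≤ S.card * (k * d) := by
        have h1 : A.card ≤ S.card + (k - 1) * (d * S.card) :=
          le_trans (Finset.card_union_le _ _)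
            (by exact add_le_add le_rfl (le_trans hOcard (Nat.mul_le_mul_left _ hTcard)))
        obtain ⟨k', rfl⟩ : ∃ k', k = k' + 1 := ⟨k - 1, by omega⟩
        simp only [Nat.add_sub_cancel] at h1
        nlinarith [hd, hS1]
      -- real arithmetic
      have hkR : (0 : ℝ) < (k : ℝ) := by exact_mod_cast hk
      have hdR : (0 : ℝ) < (d : ℝ) := by exact_mod_cast hd
      have h4 : (4 : ℝ) * A.card ≤ (n : ℝ) := by
        have h1 : (A.card : ℝ) ≤ (S.card : ℝ) * ((k : ℝ) * (d : ℝ)) := by exact_mod_cast hAle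
        have h2 : (S.card : ℝ) * ((k : ℝ) * (d : ℝ)) ≤
            (n : ℝ) / (4 * (k : ℝ) * (d : ℝ)) * ((k : ℝ) * (d : ℝ)) := by
          apply mul_le_mul_of_nonneg_right hS (by positivity)
        have h3 : (n : ℝ) / (4 * (k : ℝ) * (d : ℝ)) * ((k : ℝ) * (d : ℝ)) = (n : ℝ) / 4 := by
          field_simp
        linarith
      have h5 : 4 * A.card ≤ n := by exact_mod_cast h4
      omega
  -- choose the target string x
  have hcn : c + 1 ≤ Fintype.card (Fin n) := by simp; omega
  obtain ⟨K, hAK, -, hKcard⟩ :=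
    Finset.exists_subsuperset_card_eq (Finset.subset_univ A) hAcard
      (by rw [Finset.card_univ]; exact hcn)
  set x : Fin n → Bool := fun j => decide (j ∈ K) with hx
  have hfilterK : (Finset.univ.filter fun j => x j = true) = K := by
    ext j; simp [hx]
  have hnR : (n : ℝ) = 2 * (c : ℝ) + 1 := by exact_mod_cast hc
  obtain ⟨y, hy⟩ : ∃ y, f y = x := by
    apply (himg x).mpr
    have hwtx : wt x = c + 1 := by rw [wt, hfilterK, hKcard]
    rw [hwtx]; push_cast; linarith
  have hwtlb : ∀ y' : Fin m → Bool, c + 1 ≤ wt (f y') := by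
    intro y'
    have h := (himg (f y')).mp ⟨y', rfl⟩
    have h1 : (n : ℝ) ≤ 2 * (wt (f y') : ℝ) := by linarith
    have h2 : n ≤ 2 * wt (f y') := by exact_mod_cast h1
    omega
  refine ⟨y, ?_, ?_⟩
  · intro j hjS
    intro x' hx'
    set y' : Fin m → Bool := fun i => if i ∈ T then x' i else y i with hy'
    have h1 : f x' j = f y' j := by
      apply eval_congr
      intro i hi
      by_cases hiT : i ∈ T
      · simp [hy', hiT]
      · have hiB : i ∈ S.biUnion fun j => inputsOf f j := Finset.mem_biUnion.mpr ⟨j, hjS, hi⟩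
        have hiI : i ∈ I := by
          by_contra hiI
          exact hiT (Finset.mem_sdiff.mpr ⟨hiB, hiI⟩)
        simp [hy', hiT, hx' i hiI]
    have h2 : ∀ j', f y' j' = true → f y j' = true := by
      intro j' hj'
      by_cases hj'O : j' ∈ O
      · have hjK' : j' ∈ K := hAK (Finset.mem_union_right _ hj'O)
        rw [hy]; simp [hx, hjK']
      · have heq : f y' j' = f y j' := by
          apply eval_congr
          intro i hi
          have hiT : i ∉ T := by
            intro hiT
            have haff : Affects f i j' := by simpa [inputsOf] using hi
            exact hj'O (Finset.mem_biUnion.mpr ⟨i, hiT, by simpa [outputsOf] using haff⟩)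
          simp [hy', hiT]
        rw [← heq]; exact hj'
    have h3 : (Finset.univ.filter fun j' => f y' j' = true) ⊆
        Finset.univ.filter fun j' => f y j' = true := by
      intro j' hj'
      simp only [Finset.mem_filter, Finset.mem_univ, true_and] at hj' ⊢
      exact h2 j' hj'
    have h4 : (Finset.univ.filter fun j' => f y j' = true).card ≤
        (Finset.univ.filter fun j' => f y' j' = true).card := by
      have hc1 : (Finset.univ.filter fun j' => f y j' = true).card = c + 1 := by
        rw [hy, hfilterK, hKcard]
      rw [hc1]; exact hwtlb y'
    have h5 := Finset.eq_of_subset_of_card_le h3 h4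
    have hjK : j ∈ K := hAK (Finset.mem_union_left _ hjS)
    have hfyj : f y j = true := by rw [hy]; simp [hx, hjK]
    have hjmem : j ∈ Finset.univ.filter fun j' => f y' j' = true := by
      rw [h5]; simp [hfyj]
    simp only [Finset.mem_filter] at hjmem
    rw [h1]; exact hjmem.2
  · have hsub : (Finset.univ.filter fun j : Fin n => FixesToOne f I y j) ⊆
        Finset.univ.filter fun j => f y j = true := by
      intro j hj
      simp only [Finset.mem_filter, Finset.mem_univ, true_and] at hj ⊢
      exact hj y (fun i _ => rfl)
    have h1 := Finset.card_le_card hsub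
    rw [hy, hfilterK, hKcard] at h1
    have h2 : ((Finset.univ.filter fun j : Fin n => FixesToOne f I y j).card : ℝ) ≤
        (c : ℝ) + 1 := by exact_mod_cast h1
    linarith
end

section
/- Let f : {0,1}^m → {0,1}^n and let I ⊆ [m] be an arbitrary set of input bits with 1 ≤ |I| ≤ n/20. Then there exists a set S ⊆ [n] of output bits with |S| ≤ 2|I| such that for every assignment ρ ∈ {0,1}^I that fixes at most (n+1)/2 output bits to 1, there exists a bit j ∈ S that is not fixed to 1 by ρ. -/
open Finset

lemma fixes_congr {m n : ℕ} (f : (Fin m → Bool) → (Fin n → Bool)) (I : Finset (Fin m))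
    (ρ ρ' : Fin m → Bool) (h : ∀ i ∈ I, ρ i = ρ' i) (j : Fin n)
    (hρ : ∀ x : Fin m → Bool, (∀ i ∈ I, x i = ρ i) → f x j = true) :
    ∀ x : Fin m → Bool, (∀ i ∈ I, x i = ρ' i) → f x j = true := by
  intro x hx
  exact hρ x (fun i hi => (hx i hi).trans (h i hi).symm)

lemma greedy {n : ℕ} {α : Type*} [DecidableEq α] (C : α → Finset (Fin n)) (c : ℕ) :
    ∀ s : ℕ, ∀ B : Finset α, (∀ g ∈ B, c ≤ (C g).card) →
      ∃ S : Finset (Fin n), S.card ≤ s ∧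
        (B.filter fun g => ∀ j ∈ S, j ∉ C g).card * n ^ s ≤ B.card * (n - c) ^ s := by
  intro s
  induction s with
  | zero => intro B hB; exact ⟨∅, le_refl 0, by simp⟩
  | succ s ih =>
    intro B hB
    rcases B.eq_empty_or_nonempty with rfl | hne
    · exact ⟨∅, by simp, by simp⟩
    rcases Nat.eq_zero_or_pos n with hn | hn
    · subst hn
      exact ⟨∅, by simp, by simp [pow_succ]⟩
    have hcn : c ≤ n := by
      obtain ⟨g, hg⟩ := hne
      exact (hB g hg).trans ((card_le_univ _).trans_eq (by simp))
    -- double counting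
    have hsum : ∑ j : Fin n, (B.filter fun g => j ∈ C g).card = ∑ g ∈ B, (C g).card := by
      simp only [Finset.card_filter]
      rw [Finset.sum_comm]
      apply Finset.sum_congr rfl
      intro g _
      simp [Finset.card_filter]
    have hlow : c * B.card ≤ ∑ j : Fin n, (B.filter fun g => j ∈ C g).card := by
      rw [hsum, mul_comm]
      calc B.card * c = ∑ _g ∈ B, c := by simp [mul_comm]
        _ ≤ ∑ g ∈ B, (C g).card := Finset.sum_le_sum hB
    have hexists : ∃ j : Fin n, c * B.card ≤ n * (B.filter fun g => j ∈ C g).card := by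
      have h1 : ∑ _j : Fin n, c * B.card ≤ ∑ j : Fin n, n * (B.filter fun g => j ∈ C g).card := by
        have e1 : ∑ _j : Fin n, c * B.card = n * (c * B.card) := by
          rw [Finset.sum_const, Finset.card_univ, Fintype.card_fin, smul_eq_mul]
        have e2 : ∑ j : Fin n, n * (B.filter fun g => j ∈ C g).card
            = n * ∑ j : Fin n, (B.filter fun g => j ∈ C g).card := by
          rw [Finset.mul_sum]
        rw [e1, e2]
        exact Nat.mul_le_mul_left n hlow
      obtain ⟨j, _, hj⟩ := Finset.exists_le_of_sum_le (Finset.univ_nonempty_iff.mpr ⟨⟨0, hn⟩⟩) h1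
      exact ⟨j, hj⟩
    obtain ⟨j, hj⟩ := hexists
    set miss := B.filter fun g => j ∉ C g with hmiss
    have hsplit : (B.filter fun g => j ∈ C g).card + miss.card = B.card :=
      Finset.card_filter_add_card_filter_not _
    have hmissle : n * miss.card ≤ (n - c) * B.card := by
      have : n * miss.card + c * B.card ≤ n * B.card := by
        calc n * miss.card + c * B.card ≤ n * miss.card + n * (B.filter fun g => j ∈ C g).card :=
              Nat.add_le_add_left hj _
          _ = n * (miss.card + (B.filter fun g => j ∈ C g).card) := by ring
          _ = n * B.card := by rw [Nat.add_comm, hsplit]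
      have h2 : (n - c) * B.card = n * B.card - c * B.card := by
        rw [Nat.sub_mul]
      omega
    obtain ⟨S', hS'card, hS'⟩ := ih miss (fun g hg => hB g (Finset.mem_filter.mp hg).1)
    refine ⟨insert j S', ?_, ?_⟩
    · exact (Finset.card_insert_le _ _).trans (Nat.succ_le_succ hS'card)
    · have hsub : (B.filter fun g => ∀ j' ∈ insert j S', j' ∉ C g) ⊆
          (miss.filter fun g => ∀ j' ∈ S', j' ∉ C g) := by
        intro g hg
        rw [Finset.mem_filter] at hg ⊢
        rw [hmiss, Finset.mem_filter]
        exact ⟨⟨hg.1, hg.2 j (Finset.mem_insert_self _ _)⟩,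
          fun j' hj' => hg.2 j' (Finset.mem_insert_of_mem hj')⟩
      calc (B.filter fun g => ∀ j' ∈ insert j S', j' ∉ C g).card * n ^ (s + 1)
          = (B.filter fun g => ∀ j' ∈ insert j S', j' ∉ C g).card * n ^ s * n := by ring
        _ ≤ (miss.filter fun g => ∀ j' ∈ S', j' ∉ C g).card * n ^ s * n :=
            Nat.mul_le_mul_right n (Nat.mul_le_mul_right _ (Finset.card_le_card hsub))
        _ ≤ miss.card * (n - c) ^ s * n := Nat.mul_le_mul_right n hS'
        _ = (n * miss.card) * (n - c) ^ s := by ring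
        _ ≤ ((n - c) * B.card) * (n - c) ^ s := Nat.mul_le_mul_right _ hmissle
        _ = B.card * (n - c) ^ (s + 1) := by ring

/-- For `f : {0,1}^m → {0,1}^n` and any set `I` of input bits with
`1 ≤ |I| ≤ n/20`, there is a set `S` of output bits with `|S| ≤ 2|I|` such that every
assignment `ρ` to `I` fixing at most `(n+1)/2` output bits to `1` fails to fix some bit of
`S` to `1`. -/
theorem stmt16 (n m : ℕ) (f : (Fin m → Bool) → (Fin n → Bool))
    (I : Finset (Fin m)) (hI1 : 1 ≤ I.card) (hI2 : (I.card : ℝ) ≤ (n : ℝ) / 20) :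
    ∃ S : Finset (Fin n), S.card ≤ 2 * I.card ∧
      ∀ ρ : Fin m → Bool,
        ((Finset.univ.filter fun j : Fin n => FixesToOne f I ρ j).card : ℝ) ≤
          ((n : ℝ) + 1) / 2 →
        ∃ j ∈ S, ¬ FixesToOne f I ρ j := by
  classical
  set k := I.card with hk
  have hn20 : 20 ≤ n := by
    have h1 : (1 : ℝ) ≤ (n : ℝ) / 20 := le_trans (by exact_mod_cast hI1) hI2
    have : (20 : ℝ) ≤ (n : ℝ) := by linarith
    exact_mod_cast this
  set t := (n + 1) / 2 with ht
  have htn : t ≤ n := by omega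
  set ext : (↥I → Bool) → (Fin m → Bool) :=
    fun g i => if h : i ∈ I then g ⟨i, h⟩ else false with hext
  set C : (↥I → Bool) → Finset (Fin n) :=
    fun g => Finset.univ.filter fun j => ¬ FixesToOne f I (ext g) j with hC
  set B : Finset (↥I → Bool) :=
    Finset.univ.filter fun g =>
      (Finset.univ.filter fun j => FixesToOne f I (ext g) j).card ≤ t with hB
  have hc : ∀ g ∈ B, n - t ≤ (C g).card := by
    intro g hg
    rw [hB, Finset.mem_filter] at hg
    have hsplit : (Finset.univ.filter fun j => FixesToOne f I (ext g) j).card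
        + (C g).card = n := by
      rw [hC]
      have := Finset.card_filter_add_card_filter_not
        (s := (Finset.univ : Finset (Fin n))) (p := fun j => FixesToOne f I (ext g) j)
      simpa using this
    omega
  obtain ⟨S, hScard, hSle⟩ := greedy C (n - t) (2 * k) B hc
  have hnt : n - (n - t) = t := by omega
  rw [hnt] at hSle
  have hBcard : B.card ≤ 2 ^ k := by
    calc B.card ≤ (Finset.univ : Finset (↥I → Bool)).card := Finset.card_le_univ _
      _ = 2 ^ k := by simp [hk]
  have hkey : 2 ^ k * t ^ (2 * k) < n ^ (2 * k) := by
    have h2t : 2 * t ≤ n + 1 := by omega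
    have hlt : 2 * t ^ 2 < n ^ 2 := by nlinarith
    calc 2 ^ k * t ^ (2 * k) = (2 * t ^ 2) ^ k := by
          rw [mul_pow, pow_mul]
      _ < (n ^ 2) ^ k := Nat.pow_lt_pow_left hlt (by omega)
      _ = n ^ (2 * k) := by rw [pow_mul]
  have hempty : (B.filter fun g => ∀ j ∈ S, j ∉ C g).card = 0 := by
    by_contra hne
    have h1 : 1 ≤ (B.filter fun g => ∀ j ∈ S, j ∉ C g).card := Nat.one_le_iff_ne_zero.mpr hne
    have : n ^ (2 * k) ≤ B.card * t ^ (2 * k) := by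
      calc n ^ (2 * k) = 1 * n ^ (2 * k) := (one_mul _).symm
        _ ≤ (B.filter fun g => ∀ j ∈ S, j ∉ C g).card * n ^ (2 * k) :=
            Nat.mul_le_mul_right _ h1
        _ ≤ B.card * t ^ (2 * k) := hSle
    have : n ^ (2 * k) < n ^ (2 * k) := by
      calc n ^ (2 * k) ≤ B.card * t ^ (2 * k) := this
        _ ≤ 2 ^ k * t ^ (2 * k) := Nat.mul_le_mul_right _ hBcard
        _ < n ^ (2 * k) := hkey
    omega
  refine ⟨S, hScard, ?_⟩
  intro ρ hρ
  -- the restriction of ρ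
  set g : ↥I → Bool := fun i => ρ i with hg
  have hagree : ∀ i ∈ I, ext g i = ρ i := by
    intro i hi
    simp [hext, hg, dif_pos hi]
  have hiff : ∀ j, FixesToOne f I (ext g) j ↔ FixesToOne f I ρ j := by
    intro j
    constructor
    · exact fun h => fixes_congr f I (ext g) ρ hagree j h
    · exact fun h => fixes_congr f I ρ (ext g) (fun i hi => (hagree i hi).symm) j h
  have hcard_eq : (Finset.univ.filter fun j => FixesToOne f I (ext g) j).card
      = (Finset.univ.filter fun j => FixesToOne f I ρ j).card := by
    congr 1
    apply Finset.filter_congr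
    intro j _
    simp [hiff j]
  have hρt : (Finset.univ.filter fun j => FixesToOne f I ρ j).card ≤ t := by
    have h2 : ((Finset.univ.filter fun j : Fin n => FixesToOne f I ρ j).card : ℝ) * 2
        ≤ (n : ℝ) + 1 := by linarith
    have h3 : (Finset.univ.filter fun j : Fin n => FixesToOne f I ρ j).card * 2 ≤ n + 1 := by
      exact_mod_cast h2
    omega
  have hgB : g ∈ B := by
    rw [hB, Finset.mem_filter]
    exact ⟨Finset.mem_univ _, by rw [hcard_eq]; exact hρt⟩
  have hgnot : g ∉ B.filter fun g => ∀ j ∈ S, j ∉ C g := by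
    intro hmem
    have := Finset.card_eq_zero.mp hempty
    rw [this] at hmem
    exact absurd hmem (Finset.notMem_empty _)
  rw [Finset.mem_filter] at hgnot
  push_neg at hgnot
  obtain ⟨j, hjS, hjC⟩ := hgnot hgB
  refine ⟨j, hjS, ?_⟩
  rw [hC, Finset.mem_filter] at hjC
  exact fun h => hjC.2 ((hiff j).mpr h)
end

section
/- Suppose there exists a switching network of depth d on [n] that, starting from 1^ℓ 0^{n−ℓ}, generates the distribution X on {0,1}^n. Then there exist m and a function f : {0,1}^m → {0,1}^n of decision depth d such that: (i) X has the same distribution as f(Y) for Y uniform on {0,1}^m; (ii) each input bit of f affects at most 2^d output bits; and (iii) the support of X is contained in {x ∈ {0,1}^n : |x| = ℓ}. -/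
open Finset

/-- A partial matching on `[n]`: a set of pairs with all endpoints distinct. -/
def IsMatching {n : ℕ} (M : Finset (Fin n × Fin n)) : Prop :=
  (∀ p ∈ M, p.1 ≠ p.2) ∧
  ∀ p ∈ M, ∀ q ∈ M, p ≠ q → p.1 ≠ q.1 ∧ p.1 ≠ q.2 ∧ p.2 ≠ q.1 ∧ p.2 ≠ q.2

/-- Apply one layer of a switching network: for each pair `p` of the matching `M` whose
coin `b p` came up heads, swap the two corresponding coordinates of the string. -/
noncomputable def applyLayer {n : ℕ} (M : Finset (Fin n × Fin n)) (b : Fin n × Fin n → Bool)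
    (x : Fin n → Bool) : Fin n → Bool :=
  M.toList.foldl (fun y p => if b p then fun a => y (Equiv.swap p.1 p.2 a) else y) x

/-- The output of a depth-`d` switching network `M` on initial string `x₀`, given the coin
tosses `b` (one fair coin per pair per layer). -/
noncomputable def networkOutput {n d : ℕ} (M : Fin d → Finset (Fin n × Fin n))
    (b : Fin d → Fin n × Fin n → Bool) (x₀ : Fin n → Bool) : Fin n → Bool :=
  (List.finRange d).foldl (fun x i => applyLayer (M i) (b i) x) x₀

/-- The mass function of the distribution generated by the switching network `M` started
from `x₀`, over independent fair coins. -/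
noncomputable def networkDist {n d : ℕ} (M : Fin d → Finset (Fin n × Fin n))
    (x₀ : Fin n → Bool) : (Fin n → Bool) → ℝ :=
  fun x => ((Finset.univ.filter fun b : Fin d → Fin n × Fin n → Bool =>
      networkOutput M b x₀ = x).card : ℝ) /
    ((Finset.univ : Finset (Fin d → Fin n × Fin n → Bool)).card : ℝ)

/-- The initial string `1^ℓ 0^{n-ℓ}`. -/
def initString (n ℓ : ℕ) : Fin n → Bool := fun a => decide ((a : ℕ) < ℓ)

namespace Stmt17

variable {n : ℕ}

/-- One matched-pair step on a point. -/
def stepF (b : Fin n × Fin n → Bool) (p : Fin n × Fin n) (c : Fin n) : Fin n :=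
  if b p then Equiv.swap p.1 p.2 c else c

/-- The permutation of coordinates induced by one layer. -/
noncomputable def layerFun (M : Finset (Fin n × Fin n)) (b : Fin n × Fin n → Bool) (a : Fin n) : Fin n :=
  M.toList.foldr (stepF b) a

/-- The partner of `a` in the matching `M` (or `a` itself if unmatched). -/
noncomputable def partnerF (M : Finset (Fin n × Fin n)) (a : Fin n) : Fin n :=
  match M.toList.find? (fun p => decide (p.1 = a ∨ p.2 = a)) with
  | some p => Equiv.swap p.1 p.2 a
  | none => a

lemma foldr_stepF_of_not_mem (b : Fin n × Fin n → Bool) :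
    ∀ (l : List (Fin n × Fin n)) (c : Fin n),
      (∀ q ∈ l, q.1 ≠ c ∧ q.2 ≠ c) → l.foldr (stepF b) c = c := by
  intro l
  induction l with
  | nil => intro c _; rfl
  | cons q l ih =>
    intro c h
    have h1 := h q List.mem_cons_self
    have : l.foldr (stepF b) c = c := ih c fun q hq => h q (List.mem_cons_of_mem _ hq)
    simp only [List.foldr_cons, this, stepF]
    split
    · exact Equiv.swap_apply_of_ne_of_ne (fun hc => h1.1 hc.symm) (fun hc => h1.2 hc.symm)
    · rfl

lemma swap_endpoint_mem {p : Fin n × Fin n} {a : Fin n} (ha : p.1 = a ∨ p.2 = a) :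
    Equiv.swap p.1 p.2 a = p.1 ∨ Equiv.swap p.1 p.2 a = p.2 := by
  rcases ha with h | h
  · right; rw [← h, Equiv.swap_apply_left]
  · left; rw [← h, Equiv.swap_apply_right]

lemma layerFun_of_mem {M : Finset (Fin n × Fin n)} (hM : IsMatching M)
    (b : Fin n × Fin n → Bool) {p : Fin n × Fin n} (hp : p ∈ M) {a : Fin n}
    (ha : p.1 = a ∨ p.2 = a) :
    layerFun M b a = if b p then Equiv.swap p.1 p.2 a else a := by
  obtain ⟨s, t, hst⟩ := List.append_of_mem (Finset.mem_toList.2 hp)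
  have hnd : (s ++ p :: t).Nodup := hst ▸ M.nodup_toList
  rw [List.nodup_append] at hnd
  have hps : p ∉ s := fun hmem => hnd.2.2 p hmem p List.mem_cons_self rfl
  have hpt : p ∉ t := by
    have := hnd.2.1
    simp only [List.nodup_cons] at this
    exact this.1
  have hdis : ∀ q, q ∈ s ∨ q ∈ t → ∀ c, (c = p.1 ∨ c = p.2) → q.1 ≠ c ∧ q.2 ≠ c := by
    intro q hq c hc
    have hqM : q ∈ M := by
      rcases hq with hq | hq
      · exact Finset.mem_toList.1 (hst ▸ List.mem_append_left _ hq)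
      · exact Finset.mem_toList.1 (hst ▸ List.mem_append_right _ (List.mem_cons_of_mem _ hq))
    have hqp : q ≠ p := by
      rintro rfl
      rcases hq with hq | hq
      · exact hps hq
      · exact hpt hq
    have := hM.2 q hqM p hp hqp
    rcases hc with hc | hc
    · exact ⟨hc ▸ this.1, hc ▸ this.2.2.1⟩
    · exact ⟨hc ▸ this.2.1, hc ▸ this.2.2.2⟩
  unfold layerFun
  rw [hst, List.foldr_append, List.foldr_cons]
  have ht : t.foldr (stepF b) a = a :=
    foldr_stepF_of_not_mem b t a (fun q hq => hdis q (Or.inr hq) a (ha.imp Eq.symm Eq.symm))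
  rw [ht]
  have hstep : stepF b p a = if b p then Equiv.swap p.1 p.2 a else a := rfl
  rw [hstep]
  split
  · exact foldr_stepF_of_not_mem b s _ (fun q hq => hdis q (Or.inl hq) _ (swap_endpoint_mem ha))
  · exact foldr_stepF_of_not_mem b s _ (fun q hq => hdis q (Or.inl hq) _ (ha.imp Eq.symm Eq.symm))

lemma layerFun_of_not_mem {M : Finset (Fin n × Fin n)}
    (b : Fin n × Fin n → Bool) {a : Fin n}
    (ha : ∀ p ∈ M, ¬(p.1 = a ∨ p.2 = a)) :
    layerFun M b a = a := by
  apply foldr_stepF_of_not_mem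
  intro q hq
  have := ha q (Finset.mem_toList.1 hq)
  exact ⟨fun h => this (Or.inl h), fun h => this (Or.inr h)⟩


lemma layerFun_endpoint_cases {M : Finset (Fin n × Fin n)} (hM : IsMatching M)
    (b : Fin n × Fin n → Bool) {p : Fin n × Fin n} (hp : p ∈ M) {a : Fin n}
    (ha : p.1 = a ∨ p.2 = a) :
    p.1 = layerFun M b a ∨ p.2 = layerFun M b a := by
  rw [layerFun_of_mem hM b hp ha]
  split
  · exact (swap_endpoint_mem ha).imp Eq.symm Eq.symm
  · exact ha

lemma layerFun_invol {M : Finset (Fin n × Fin n)} (hM : IsMatching M)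
    (b : Fin n × Fin n → Bool) (a : Fin n) :
    layerFun M b (layerFun M b a) = a := by
  by_cases h : ∃ p ∈ M, p.1 = a ∨ p.2 = a
  · obtain ⟨p, hp, ha⟩ := h
    rw [layerFun_of_mem hM b hp (layerFun_endpoint_cases hM b hp ha),
      layerFun_of_mem hM b hp ha]
    split
    · simp
    · rfl
  · push_neg at h
    have h' : ∀ p ∈ M, ¬(p.1 = a ∨ p.2 = a) := by
      intro p hp hc; rcases hc with hc | hc
      · exact (h p hp).1 hc
      · exact (h p hp).2 hc
    rw [layerFun_of_not_mem b h', layerFun_of_not_mem b h']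

lemma layerFun_injective {M : Finset (Fin n × Fin n)} (hM : IsMatching M)
    (b : Fin n × Fin n → Bool) : Function.Injective (layerFun M b) :=
  Function.Involutive.injective (layerFun_invol hM b)

lemma partnerF_spec {M : Finset (Fin n × Fin n)} (hM : IsMatching M)
    (b : Fin n × Fin n → Bool) (a : Fin n) :
    layerFun M b a = a ∨ layerFun M b a = partnerF M a := by
  unfold partnerF
  rcases hfind : M.toList.find? (fun p => decide (p.1 = a ∨ p.2 = a)) with _ | p
  · left
    apply layerFun_of_not_mem
    intro p hp
    have := List.find?_eq_none.1 hfind p (Finset.mem_toList.2 hp)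
    simpa using this
  · have hp : p ∈ M := Finset.mem_toList.1 (List.mem_of_find?_eq_some hfind)
    have ha : p.1 = a ∨ p.2 = a := by simpa using List.find?_some hfind
    rw [layerFun_of_mem hM b hp ha, hfind]
    split
    · right; rfl
    · left; rfl

/-- layerFun only depends on coins of pairs in the layer, and the value at `a ∉ {p.1,p.2}`
does not depend on coin `p`. -/
lemma layerFun_congr_off {M : Finset (Fin n × Fin n)} (hM : IsMatching M)
    {b b' : Fin n × Fin n → Bool} {p : Fin n × Fin n}
    (hbb : ∀ q, q ≠ p → b q = b' q) {a : Fin n} (hap : ¬(p.1 = a ∨ p.2 = a)) :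
    layerFun M b a = layerFun M b' a := by
  by_cases h : ∃ q ∈ M, q.1 = a ∨ q.2 = a
  · obtain ⟨q, hq, haq⟩ := h
    have hqp : q ≠ p := by rintro rfl; exact hap haq
    rw [layerFun_of_mem hM b hq haq, layerFun_of_mem hM b' hq haq, hbb q hqp]
  · push_neg at h
    have h' : ∀ q ∈ M, ¬(q.1 = a ∨ q.2 = a) := by
      intro q hq hc; rcases hc with hc | hc
      · exact (h q hq).1 hc
      · exact (h q hq).2 hc
    rw [layerFun_of_not_mem b h', layerFun_of_not_mem b' h']

lemma layerFun_congr {M : Finset (Fin n × Fin n)}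
    {b b' : Fin n × Fin n → Bool} (hbb : b = b') (a : Fin n) :
    layerFun M b a = layerFun M b' a := by rw [hbb]

variable {d : ℕ}

/-- Trace a coordinate backwards through the given list of layers. -/
noncomputable def backtrace (M : Fin d → Finset (Fin n × Fin n))
    (b : Fin d → Fin n × Fin n → Bool) : List (Fin d) → Fin n → Fin n
  | [], a => a
  | i :: rest, a => backtrace M b rest (layerFun (M i) (b i) a)

lemma backtrace_append (M : Fin d → Finset (Fin n × Fin n))
    (b : Fin d → Fin n × Fin n → Bool) (L₁ L₂ : List (Fin d)) (a : Fin n) :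
    backtrace M b (L₁ ++ L₂) a = backtrace M b L₂ (backtrace M b L₁ a) := by
  induction L₁ generalizing a with
  | nil => rfl
  | cons i L₁ ih =>
    simp only [List.cons_append, backtrace]
    exact ih _

lemma backtrace_congr {M : Fin d → Finset (Fin n × Fin n)}
    {b b' : Fin d → Fin n × Fin n → Bool} {L : List (Fin d)}
    (h : ∀ k ∈ L, b k = b' k) (a : Fin n) :
    backtrace M b L a = backtrace M b' L a := by
  induction L generalizing a with
  | nil => rfl
  | cons i L ih =>
    simp only [backtrace]
    rw [h i List.mem_cons_self]
    exact ih (fun k hk => h k (List.mem_cons_of_mem _ hk)) _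

lemma backtrace_injective {M : Fin d → Finset (Fin n × Fin n)} (hM : ∀ i, IsMatching (M i))
    (b : Fin d → Fin n × Fin n → Bool) (L : List (Fin d)) :
    Function.Injective (backtrace M b L) := by
  induction L with
  | nil => exact fun a a' h => h
  | cons i L ih =>
    intro a a' h
    exact layerFun_injective (hM i) (b i) (ih h)

lemma applyLayer_eq (M : Finset (Fin n × Fin n)) (b : Fin n × Fin n → Bool)
    (x : Fin n → Bool) : applyLayer M b x = fun a => x (layerFun M b a) := by
  unfold applyLayer layerFun
  generalize M.toList = l
  induction l generalizing x with
  | nil => rfl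
  | cons p l ih =>
    simp only [List.foldl_cons, List.foldr_cons]
    rw [ih]
    funext a
    simp only [stepF]
    split <;> rfl

lemma networkOutput_eq (M : Fin d → Finset (Fin n × Fin n))
    (b : Fin d → Fin n × Fin n → Bool) (x₀ : Fin n → Bool) (j : Fin n) :
    networkOutput M b x₀ j = x₀ (backtrace M b (List.finRange d).reverse j) := by
  unfold networkOutput
  have key : ∀ (L : List (Fin d)) (x : Fin n → Bool) (j : Fin n),
      (L.foldl (fun x i => applyLayer (M i) (b i) x) x) j
        = x (backtrace M b L.reverse j) := by
    intro L
    induction L with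
    | nil => intro x j; rfl
    | cons i L ih =>
      intro x j
      simp only [List.foldl_cons, List.reverse_cons]
      rw [ih, backtrace_append]
      rw [applyLayer_eq]
      rfl
  exact key _ _ _


/-- Decision tree computing `fun y => x₀ (backtrace M (decode y) L a)`. -/
noncomputable def buildTree {m : ℕ} (x₀ : Fin n → Bool) (M : Fin d → Finset (Fin n × Fin n))
    (enc : Fin d × (Fin n × Fin n) → Fin m) : List (Fin d) → Fin n → DTree m
  | [], a => .leaf (x₀ a)
  | i :: rest, a =>
    match (M i).toList.find? (fun p => decide (p.1 = a ∨ p.2 = a)) with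
    | some p => .node (enc (i, p)) (buildTree x₀ M enc rest a)
        (buildTree x₀ M enc rest (Equiv.swap p.1 p.2 a))
    | none => buildTree x₀ M enc rest a

lemma buildTree_depth {m : ℕ} (x₀ : Fin n → Bool) (M : Fin d → Finset (Fin n × Fin n))
    (enc : Fin d × (Fin n × Fin n) → Fin m) (L : List (Fin d)) (a : Fin n) :
    (buildTree x₀ M enc L a).depth ≤ L.length := by
  induction L generalizing a with
  | nil => exact Nat.le_refl _
  | cons i L ih =>
    simp only [buildTree]
    rcases hfind : (M i).toList.find? (fun p => decide (p.1 = a ∨ p.2 = a)) with _ | p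
    all_goals rw [hfind]
    · exact Nat.le_trans (ih a) (Nat.le_succ _)
    · simp only [DTree.depth, List.length_cons]
      exact Nat.succ_le_succ (max_le (ih a) (ih _))

lemma buildTree_eval {m : ℕ} (x₀ : Fin n → Bool) {M : Fin d → Finset (Fin n × Fin n)}
    (hM : ∀ i, IsMatching (M i))
    (enc : Fin d × (Fin n × Fin n) → Fin m) (L : List (Fin d)) (a : Fin n)
    (y : Fin m → Bool) :
    (buildTree x₀ M enc L a).eval y
      = x₀ (backtrace M (fun i p => y (enc (i, p))) L a) := by
  induction L generalizing a with
  | nil => rfl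
  | cons i L ih =>
    simp only [buildTree, backtrace]
    rcases hfind : (M i).toList.find? (fun p => decide (p.1 = a ∨ p.2 = a)) with _ | p
    all_goals rw [hfind]
    · have h' : ∀ p ∈ M i, ¬(p.1 = a ∨ p.2 = a) := by
        intro p hp
        simpa using List.find?_eq_none.1 hfind p (Finset.mem_toList.2 hp)
      rw [layerFun_of_not_mem _ h']
      exact ih a
    · have hp : p ∈ M i := Finset.mem_toList.1 (List.mem_of_find?_eq_some hfind)
      have ha : p.1 = a ∨ p.2 = a := by simpa using List.find?_some hfind
      rw [layerFun_of_mem (hM i) _ hp ha]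
      simp only [DTree.eval]
      rcases hy : y (enc (i, p)) with _ | _
      · simp only [Bool.false_eq_true, if_false, ih a]
      · simp only [if_true, ih]

/-- All coordinates from which `S` can be reached going forward through the layers of `L`. -/
noncomputable def Pre (M : Fin d → Finset (Fin n × Fin n)) :
    List (Fin d) → Finset (Fin n) → Finset (Fin n)
  | [], S => S
  | i :: rest, S => (Pre M rest S) ∪ (Pre M rest S).image (partnerF (M i))

lemma card_Pre (M : Fin d → Finset (Fin n × Fin n)) (L : List (Fin d)) (S : Finset (Fin n)) :
    (Pre M L S).card ≤ 2 ^ L.length * S.card := by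
  induction L with
  | nil =>
    simp only [Pre, List.length_nil, pow_zero, one_mul]
    exact Nat.le_refl _
  | cons i L ih =>
    simp only [Pre, List.length_cons]
    calc ((Pre M L S) ∪ (Pre M L S).image (partnerF (M i))).card
        ≤ (Pre M L S).card + ((Pre M L S).image (partnerF (M i))).card :=
          Finset.card_union_le _ _
      _ ≤ (Pre M L S).card + (Pre M L S).card :=
          Nat.add_le_add_left (Finset.card_image_le) _
      _ ≤ 2 ^ L.length * S.card + 2 ^ L.length * S.card := Nat.add_le_add ih ih
      _ = 2 ^ (L.length + 1) * S.card := by ring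

lemma mem_Pre {M : Fin d → Finset (Fin n × Fin n)} (hM : ∀ i, IsMatching (M i))
    (b : Fin d → Fin n × Fin n → Bool) (L : List (Fin d)) (S : Finset (Fin n)) (a : Fin n)
    (h : backtrace M b L a ∈ S) : a ∈ Pre M L S := by
  induction L generalizing a with
  | nil => exact h
  | cons i L ih =>
    simp only [backtrace] at h
    have hc : layerFun (M i) (b i) a ∈ Pre M L S := ih _ h
    have ha : a = layerFun (M i) (b i) (layerFun (M i) (b i) a) :=
      (layerFun_invol (hM i) (b i) a).symm
    simp only [Pre, Finset.mem_union]
    rcases partnerF_spec (hM i) (b i) (layerFun (M i) (b i) a) with hcase | hcase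
    · left; rw [ha, hcase]; exact hc
    · right
      rw [ha, hcase]
      exact Finset.mem_image_of_mem _ hc


lemma wt_comp {g : Fin n → Fin n} (hg : Function.Injective g) (x : Fin n → Bool) :
    wt (fun j => x (g j)) = wt x := by
  have hb : Function.Bijective g := Finite.injective_iff_bijective.1 hg
  unfold wt
  apply Finset.card_bij (fun j _ => g j)
  · intro a ha
    simp only [Finset.mem_filter, Finset.mem_univ, true_and] at ha ⊢
    exact ha
  · intro a _ a' _ h
    exact hg h
  · intro c hc
    simp only [Finset.mem_filter, Finset.mem_univ, true_and] at hc
    obtain ⟨j, rfl⟩ := hb.2 c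
    exact ⟨j, by simp [hc], rfl⟩

lemma wt_initString {ℓ : ℕ} (hℓ : ℓ ≤ n) : wt (initString n ℓ) = ℓ := by
  unfold wt initString
  have himg : (Finset.univ.filter fun a : Fin n => (decide ((a : ℕ) < ℓ)) = true).image
      Fin.val = Finset.range ℓ := by
    ext k
    simp only [Finset.mem_image, Finset.mem_filter, Finset.mem_univ, true_and,
      Finset.mem_range, decide_eq_true_eq]
    constructor
    · rintro ⟨a, ha, rfl⟩; exact ha
    · intro hk; exact ⟨⟨k, lt_of_lt_of_le hk hℓ⟩, hk, rfl⟩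
  calc (Finset.univ.filter fun a : Fin n => (decide ((a : ℕ) < ℓ)) = true).card
      = ((Finset.univ.filter fun a : Fin n => (decide ((a : ℕ) < ℓ)) = true).image
          Fin.val).card := (Finset.card_image_of_injective _ Fin.val_injective).symm
    _ = (Finset.range ℓ).card := by rw [himg]
    _ = ℓ := Finset.card_range ℓ

end Stmt17

open Stmt17

/-- If a switching network of depth `d` on `[n]`, started from
`1^ℓ 0^{n-ℓ}`, generates the distribution `X`, then there are `m` and
`f : {0,1}^m → {0,1}^n` of decision depth `d` such that `f(Y)` (for uniform `Y`) has the
same distribution as `X`, each input bit of `f` affects at most `2^d` output bits, and the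
support of `X` is contained in the weight-`ℓ` slice. -/
theorem stmt17 (n d ℓ : ℕ) (hℓ : ℓ ≤ n)
    (M : Fin d → Finset (Fin n × Fin n)) (hM : ∀ i, IsMatching (M i)) :
    ∃ (m : ℕ) (f : (Fin m → Bool) → (Fin n → Bool)),
      hasDecisionDepth f d ∧
      (∀ i : Fin m, (outputsOf f i).card ≤ 2 ^ d) ∧
      srcDist f = networkDist M (initString n ℓ) ∧
      (∀ x : Fin n → Bool, networkDist M (initString n ℓ) x ≠ 0 → wt x = ℓ) := by
  classical
  set x₀ : Fin n → Bool := initString n ℓ with hx₀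
  set m : ℕ := Fintype.card (Fin d × (Fin n × Fin n)) with hm
  let e : (Fin d × (Fin n × Fin n)) ≃ Fin m := Fintype.equivFin _
  let decode : (Fin m → Bool) → (Fin d → Fin n × Fin n → Bool) :=
    fun y i p => y (e (i, p))
  let encode : (Fin d → Fin n × Fin n → Bool) → (Fin m → Bool) :=
    fun b k => b (e.symm k).1 (e.symm k).2
  have hde : ∀ b, decode (encode b) = b := by
    intro b
    funext i p
    show b (e.symm (e (i, p))).1 (e.symm (e (i, p))).2 = b i p
    rw [Equiv.symm_apply_apply]
  have hed : ∀ y, encode (decode y) = y := by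
    intro y
    funext k
    show y (e ((e.symm k).1, (e.symm k).2)) = y k
    rw [Prod.mk.eta, Equiv.apply_symm_apply]
  let f : (Fin m → Bool) → Fin n → Bool := fun y => networkOutput M (decode y) x₀
  set L : List (Fin d) := (List.finRange d).reverse with hLdef
  have hLlen : L.length = d := by simp [hLdef]
  have hLnd : L.Nodup := by
    rw [hLdef, List.nodup_reverse]
    exact List.nodup_finRange d
  refine ⟨m, f, ?_, ?_, ?_, ?_⟩
  · -- decision depth
    intro j
    refine ⟨buildTree x₀ M (fun c => e c) L j, ?_, ?_⟩
    · exact le_of_le_of_eq (buildTree_depth x₀ M (fun c => e c) L j) hLlen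
    · intro y
      show networkOutput M (decode y) x₀ j = _
      rw [networkOutput_eq, buildTree_eval x₀ hM]
  · -- locality of influence
    intro idx
    set c := e.symm idx with hc
    set i : Fin d := c.1
    set p : Fin n × Fin n := c.2
    have hidx : e (i, p) = idx := by rw [Prod.mk.eta, hc, Equiv.apply_symm_apply]
    have hiL : i ∈ L := by simp [hLdef]
    obtain ⟨L₁, L₂, hL⟩ := List.append_of_mem hiL
    have hnd : (L₁ ++ i :: L₂).Nodup := hL ▸ hLnd
    rw [List.nodup_append] at hnd
    have hL₁i : ∀ k ∈ L₁, k ≠ i := by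
      intro k hk hki
      exact hnd.2.2 k hk i List.mem_cons_self hki
    have hL₂i : ∀ k ∈ L₂, k ≠ i := by
      intro k hk hki
      have := hnd.2.1
      rw [List.nodup_cons] at this
      exact this.1 (hki ▸ hk)
    have hsub : outputsOf f idx ⊆ Pre M L₁ {p.1, p.2} := by
      intro j hj
      rw [outputsOf, Finset.mem_filter] at hj
      obtain ⟨y, hy⟩ := hj.2
      set y' := Function.update y idx (!(y idx)) with hy'
      set b := decode y with hb
      set b' := decode y' with hb'
      have hbb : ∀ k q, (k, q) ≠ (i, p) → b k q = b' k q := by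
        intro k q hkq
        show y (e (k, q)) = y' (e (k, q))
        rw [hy', Function.update_of_ne]
        intro hcon
        exact hkq (by rw [← hidx] at hcon; exact e.injective hcon)
      have hbk : ∀ k, k ≠ i → b k = b' k := by
        intro k hk
        funext q
        exact hbb k q (by simp [hk])
      by_contra hjnot
      apply hy
      show networkOutput M b x₀ j = networkOutput M b' x₀ j
      rw [networkOutput_eq, networkOutput_eq, ← hLdef, hL]
      have hcnot : ¬(p.1 = backtrace M b L₁ j ∨ p.2 = backtrace M b L₁ j) := by
        intro hcon
        apply hjnot
        apply mem_Pre hM b L₁ {p.1, p.2} j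
        rcases hcon with hcon | hcon
        · rw [← hcon]; exact Finset.mem_insert_self _ _
        · rw [← hcon]; exact Finset.mem_insert_of_mem (Finset.mem_singleton_self _)
      have h1 : backtrace M b L₁ j = backtrace M b' L₁ j :=
        backtrace_congr (fun k hk => hbk k (hL₁i k hk)) j
      rw [backtrace_append, backtrace_append]
      show x₀ (backtrace M b L₂ (layerFun (M i) (b i) (backtrace M b L₁ j)))
        = x₀ (backtrace M b' L₂ (layerFun (M i) (b' i) (backtrace M b' L₁ j)))
      rw [← h1]
      rw [layerFun_congr_off (hM i) (fun q hq => hbb i q (by simp [hq])) hcnot]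
      rw [backtrace_congr (fun k hk => hbk k (hL₂i k hk))]
    have hlen : L₁.length + 1 ≤ d := by
      have h2 : (L₁ ++ i :: L₂).length = d := by rw [← hL]; exact hLlen
      simp only [List.length_append, List.length_cons] at h2
      omega
    calc (outputsOf f idx).card ≤ (Pre M L₁ {p.1, p.2}).card := Finset.card_le_card hsub
      _ ≤ 2 ^ L₁.length * ({p.1, p.2} : Finset (Fin n)).card := card_Pre M L₁ _
      _ ≤ 2 ^ L₁.length * 2 := by
          apply Nat.mul_le_mul_left
          exact Finset.card_insert_le _ _ |>.trans (by simp)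
      _ = 2 ^ (L₁.length + 1) := by ring
      _ ≤ 2 ^ d := Nat.pow_le_pow_right (by norm_num) hlen
  · -- equidistribution
    have E : (Fin m → Bool) ≃ (Fin d → Fin n × Fin n → Bool) :=
      ⟨decode, encode, hed, hde⟩
    have hcard : ((Finset.univ : Finset (Fin d → Fin n × Fin n → Bool)).card : ℕ) = 2 ^ m := by
      rw [Finset.card_univ, ← Fintype.card_congr E, Fintype.card_fun]
      simp
    funext x
    show ((Finset.univ.filter fun y => f y = x).card : ℝ) / 2 ^ m = _
    have hnum : (Finset.univ.filter fun y => f y = x).card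
        = (Finset.univ.filter fun b : Fin d → Fin n × Fin n → Bool =>
            networkOutput M b x₀ = x).card := by
      apply Finset.card_bij' (fun y _ => decode y) (fun b _ => encode b)
      · intro y hy
        rw [Finset.mem_filter] at hy ⊢
        exact ⟨Finset.mem_univ _, hy.2⟩
      · intro b hb
        rw [Finset.mem_filter] at hb ⊢
        refine ⟨Finset.mem_univ _, ?_⟩
        show networkOutput M (decode (encode b)) x₀ = x
        rw [hde]
        exact hb.2
      · intro y _; exact hed y
      · intro b _; exact hde b
    rw [networkDist, hnum, hcard]
    push_cast
    ring
  · -- support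
    intro x hx
    rw [networkDist] at hx
    have hne : (Finset.univ.filter fun b : Fin d → Fin n × Fin n → Bool =>
        networkOutput M b x₀ = x) ≠ ∅ := by
      intro hcon
      apply hx
      rw [hcon]
      simp
    obtain ⟨b, hb⟩ := Finset.nonempty_iff_ne_empty.2 hne
    rw [Finset.mem_filter] at hb
    rw [← hb.2]
    have : networkOutput M b x₀ = fun j => x₀ (backtrace M b L j) := by
      funext j; exact networkOutput_eq M b x₀ j
    rw [this, wt_comp (backtrace_injective hM b L) x₀]
    exact wt_initString hℓ
end
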